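/- arXiv:2510.00364 — 8 statements merged into one kernel-verified Lean document; each statement's English description precedes it below -/
import Mathlib

section
/- For integers k ≥ 1 and a ≥ 1, a realization LS(a^k) (of the partition of ka with k parts all equal to a) exists if and only if k ≠ 2. -/
/-!
For `k ≠ 2` there is a latin square `K` of order `k` whose diagonal is a transversal (odd `k`: the
midpoint square `(x + y) / 2` on `ZMod k`; even `k ≥ 4`: the prolongation of the midpoint square on
`ZMod (k - 1)` along its transversal `{(x, x + 1)}`). The direct product of `K` with any latin square
of order `a` has the blocks `{i} × Fin a` of rows and columns as disjoint subsquares, on the symbol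
blocks `{K i i} × Fin a`.

For `k = 2`, take `x` in the first row block and `y` in the second column block. Row `x` already
uses all symbols of the first subsquare inside the first column block, and column `y` uses all
symbols of the second subsquare inside the second row block, so `L x y` lies in neither symbol
block; but the two symbol blocks cover all `2a` symbols.
-/

/-- A latin square of order `n`: an `n × n` array with symbols from a set of
size `n` (encoded as `Fin n`) such that every symbol occurs exactly once in
every row and every column. -/
def IsLatinSquare {n : ℕ} (L : Fin n → Fin n → Fin n) : Prop :=
  (∀ i, Function.Bijective fun j => L i j) ∧ (∀ j, Function.Bijective fun i => L i j)

/-- `L` has pairwise disjoint subsquares of orders `h 0, …, h (k-1)`: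
for each `i` there are sets `R i` of rows, `C i` of columns and `S i` of
symbols, each of size `h i`, pairwise disjoint (no shared rows, columns or
symbols), such that the subarray on rows `R i` and columns `C i` only uses
the symbols `S i` (given that `L` is a latin square, this subarray is then
itself a latin square of order `h i` on the symbol set `S i`). -/
def HasDisjointSubsquares {n k : ℕ} (L : Fin n → Fin n → Fin n) (h : Fin k → ℕ) : Prop :=
  ∃ R C S : Fin k → Finset (Fin n),
    (∀ i, (R i).card = h i) ∧ (∀ i, (C i).card = h i) ∧ (∀ i, (S i).card = h i) ∧
    (∀ i j, i ≠ j → Disjoint (R i) (R j)) ∧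
    (∀ i j, i ≠ j → Disjoint (C i) (C j)) ∧
    (∀ i j, i ≠ j → Disjoint (S i) (S j)) ∧
    (∀ i, ∀ x ∈ R i, ∀ y ∈ C i, L x y ∈ S i)

/-- An incomplete latin square `ILS(n; h_1 … h_k)`: a latin square of order `n`
with pairwise disjoint subsquares of orders `h_1, …, h_k`. -/
def HasILS (n : ℕ) {k : ℕ} (h : Fin k → ℕ) : Prop :=
  ∃ L : Fin n → Fin n → Fin n, IsLatinSquare L ∧ HasDisjointSubsquares L h

/-- A realization of the partition `(h_1 … h_k)` of `n = h_1 + … + h_k`: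
a latin square of order `n` with pairwise disjoint subsquares of orders
`h_1, …, h_k`. -/
def HasRealization {k : ℕ} (h : Fin k → ℕ) : Prop :=
  HasILS (∑ i, h i) h

open Function Finset

variable {α β : Type*}

/-- `IsLatinSquare` over an arbitrary carrier; on `Fin n` the two agree definitionally. -/
def IsLatin (L : α → α → α) : Prop :=
  (∀ x, Bijective (L x)) ∧ (∀ y, Bijective fun x => L x y)

namespace IsLatin

lemma add [AddGroup α] : IsLatin (α := α) (· + ·) :=
  ⟨fun x => (Equiv.addLeft x).bijective, fun y => (Equiv.addRight y).bijective⟩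

lemma prod {K : α → α → α} {A : β → β → β} (hK : IsLatin K) (hA : IsLatin A) :
    IsLatin fun u v : α × β => (K u.1 v.1, A u.2 v.2) :=
  ⟨fun u => (hK.1 u.1).prodMap (hA.1 u.2), fun v => (hK.2 v.1).prodMap (hA.2 v.2)⟩

lemma conj {L : α → α → α} (hL : IsLatin L) (e : α ≃ β) :
    IsLatin fun x y => e (L (e.symm x) (e.symm y)) :=
  ⟨fun x => e.bijective.comp ((hL.1 (e.symm x)).comp e.symm.bijective),
    fun y => e.bijective.comp ((hL.2 (e.symm y)).comp e.symm.bijective)⟩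

lemma exists_fin [Fintype α] {L : α → α → α} (hL : IsLatin L) (hd : Injective fun x => L x x)
    {n : ℕ} (hn : Fintype.card α = n) :
    ∃ K : Fin n → Fin n → Fin n, IsLatin K ∧ Injective fun i => K i i :=
  let e := Fintype.equivFinOfCardEq hn
  ⟨_, hL.conj e, e.injective.comp (hd.comp e.symm.injective)⟩

end IsLatin

lemma exists_isLatin_fin (n : ℕ) : ∃ A : Fin n → Fin n → Fin n, IsLatin A := by
  cases n with
  | zero => exact ⟨fun x _ => x, fun x => x.elim0, fun y => y.elim0⟩
  | succ n => exact ⟨_, IsLatin.add⟩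

section Midpoint

variable (R : Type*) {V : Type*} [Ring R] [Invertible (2 : R)] [AddCommGroup V] [Module R V]

lemma isLatin_midpoint : IsLatin (midpoint R : V → V → V) := by
  have hrow (x : V) : Bijective (midpoint R x) :=
    bijective_iff_existsUnique _ |>.2 fun z => by
      simpa only [midpoint_eq_iff'] using existsUnique_eq'
  exact ⟨hrow, fun y => by simpa only [midpoint_comm] using hrow y⟩

lemma bijective_midpoint_add_right (v : V) : Bijective fun x : V => midpoint R x (x + v) := by
  have h (x : V) : midpoint R x (x + v) = x + midpoint R 0 v := by
    simpa [midpoint_self] using (midpoint_vadd_midpoint (R := R) x x (0 : V) v).symm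
  rw [funext h]
  exact (Equiv.addRight _).bijective

end Midpoint

/-- Prolongation of `L` along a transversal `{(x, τ x)}`: the transversal cells get the new symbol
`none`, and their old symbols are moved to the new row and column `none`. -/
def prolong [DecidableEq α] (L : α → α → α) (τ : α ≃ α) : Option α → Option α → Option α
  | some x, v => (Equiv.swap none (some (τ x)) v).map (L x)
  | none, v => v.map fun y => L (τ.symm y) y

lemma bijective_optionMap {f : α → β} (hf : Bijective f) : Bijective (Option.map f) :=
  (Equiv.optionCongr (Equiv.ofBijective f hf)).bijective

section Prolong

variable [DecidableEq α] {L : α → α → α} {τ : α ≃ α}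

lemma prolong_none_right (u : Option α) : prolong L τ u none = u.map fun x => L x (τ x) := by
  cases u <;> simp [prolong]

lemma prolong_some_right (u : Option α) (y : α) :
    prolong L τ u (some y) = (Equiv.swap none (some (τ.symm y)) u).map fun x => L x y := by
  cases u with
  | none => simp [prolong]
  | some x =>
    by_cases hxy : τ x = y
    · subst hxy; simp [prolong]
    · have : x ≠ τ.symm y := fun h => hxy (by simp [h])
      simp [prolong, Equiv.swap_apply_of_ne_of_ne, Ne.symm hxy, this]

lemma IsLatin.prolong (hL : IsLatin L) (hτ : Bijective fun x => L x (τ x)) :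
    IsLatin (prolong L τ) := by
  refine ⟨?_, ?_⟩
  · rintro (_ | x)
    · have : (fun y => L (τ.symm y) y) = (fun x => L x (τ x)) ∘ τ.symm := by
        funext y; simp
      exact bijective_optionMap (this ▸ hτ.comp τ.symm.bijective)
    · exact (bijective_optionMap (hL.1 x)).comp (Equiv.swap _ _).bijective
  · rintro (_ | y)
    · simpa only [prolong_none_right] using bijective_optionMap hτ
    · rw [funext (prolong_some_right · y)]
      exact (bijective_optionMap (hL.2 y)).comp (Equiv.swap _ _).bijective

lemma injective_diag_prolong (hd : Injective fun x => L x x) (hτ : ∀ x, τ x ≠ x) :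
    Injective fun u => prolong L τ u u := by
  have : (fun u => prolong L τ u u) = Option.map fun x => L x x := by
    funext u
    cases u with
    | none => rfl
    | some x => simp [prolong, Equiv.swap_apply_of_ne_of_ne, Ne.symm (hτ x)]
  exact this ▸ Option.map_injective hd

end Prolong

lemma ZMod.isUnit_two {q : ℕ} (hq : Odd q) : IsUnit (2 : ZMod q) := by
  simpa using (ZMod.isUnit_iff_coprime 2 q).2 hq.coprime_two_left

lemma exists_isLatin_injective_diag_of_odd {k : ℕ} (hk : Odd k) :
    ∃ K : Fin k → Fin k → Fin k, IsLatin K ∧ Injective fun i => K i i := by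
  have : NeZero k := ⟨hk.pos.ne'⟩
  have := (ZMod.isUnit_two hk).invertible
  exact (isLatin_midpoint (ZMod k)).exists_fin
    (by simp only [midpoint_self]; exact injective_id) (ZMod.card k)

lemma exists_isLatin_injective_diag_of_even {k : ℕ} (hk : Even k) (h4 : 4 ≤ k) :
    ∃ K : Fin k → Fin k → Fin k, IsLatin K ∧ Injective fun i => K i i := by
  obtain ⟨q, rfl⟩ : ∃ q, k = q + 1 := ⟨k - 1, by omega⟩
  have hq : Odd q := by simpa [Nat.even_add_one] using hk
  have : NeZero q := ⟨by omega⟩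
  have : Fact (1 < q) := ⟨by omega⟩
  have := (ZMod.isUnit_two hq).invertible
  have hcard : Fintype.card (Option (ZMod q)) = q + 1 := by
    rw [Fintype.card_option, ZMod.card]
  refine ((isLatin_midpoint (ZMod q)).prolong (τ := Equiv.addRight 1)
    (bijective_midpoint_add_right _ 1)).exists_fin ?_ hcard
  exact injective_diag_prolong (by simp only [midpoint_self]; exact injective_id) (by simp)

lemma exists_isLatin_injective_diag {k : ℕ} (hk : k ≠ 2) :
    ∃ K : Fin k → Fin k → Fin k, IsLatin K ∧ Injective fun i => K i i := by
  rcases Nat.even_or_odd k with heven | hodd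
  · obtain rfl | h4 : k = 0 ∨ 4 ≤ k := by obtain ⟨m, rfl⟩ := heven; omega
    · exact ⟨fun i _ => i, ⟨fun i => i.elim0, fun j => j.elim0⟩, fun i => i.elim0⟩
    · exact exists_isLatin_injective_diag_of_even heven h4
  · exact exists_isLatin_injective_diag_of_odd hodd

lemma hasILS_mul {k a : ℕ} {K : Fin k → Fin k → Fin k} {A : Fin a → Fin a → Fin a}
    (hK : IsLatin K) (hd : Injective fun i => K i i) (hA : IsLatin A) :
    HasILS (k * a) fun _ : Fin k => a := by
  let e := (finProdFinEquiv (m := k) (n := a)).toEmbedding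
  let block (i : Fin k) : Finset (Fin (k * a)) := ({i} ×ˢ univ).map e
  have hcard (i : Fin k) : #(block i) = a := by simp [block]
  have hdisj (i j : Fin k) (hij : i ≠ j) : Disjoint (block i) (block j) :=
    (disjoint_map e).2 (disjoint_product.2 (.inl (disjoint_singleton.2 hij)))
  refine ⟨_, (hK.prod hA).conj finProdFinEquiv, block, block, fun i => block (K i i),
    hcard, hcard, fun i => hcard (K i i), hdisj, hdisj, fun i j hij => hdisj _ _ (hd.ne hij), ?_⟩
  intro i x hx y hy
  obtain ⟨⟨i', b⟩, hib, rfl⟩ := mem_map.1 hx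
  obtain ⟨⟨j', c⟩, hjc, rfl⟩ := mem_map.1 hy
  obtain rfl : i = i' := by simpa using hib
  obtain rfl : i = j' := by simpa using hjc
  exact mem_map.2 ⟨(K i i, A b c), by simp, by simp [e]⟩

lemma Function.Injective.apply_notMem_of_card_le {γ : Type*} {f : β → γ} (hf : Injective f)
    {C : Finset β} {S : Finset γ} (hcard : #S ≤ #C) (hmaps : ∀ y ∈ C, f y ∈ S) {y : β}
    (hy : y ∉ C) : f y ∉ S := by
  classical
  have himage : C.image f = S :=
    eq_of_subset_of_card_le (image_subset_iff.2 hmaps) (by rwa [card_image_of_injective _ hf])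
  rw [← himage, mem_image]
  rintro ⟨y', hy', hfy⟩
  exact hy (hf hfy ▸ hy')

lemma not_hasRealization_of_two {h : Fin 2 → ℕ} (h0 : 0 < h 0) (h1 : 0 < h 1) :
    ¬ HasRealization h := by
  rintro ⟨L, ⟨hrow, hcol⟩, R, C, S, hR, hC, hS, hRd, hCd, hSd, hsub⟩
  obtain ⟨x, hx⟩ : (R 0).Nonempty := card_pos.1 (hR 0 ▸ h0)
  obtain ⟨y, hy⟩ : (C 1).Nonempty := card_pos.1 (hC 1 ▸ h1)
  have hS_union : S 0 ∪ S 1 = univ := by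
    refine eq_univ_of_card _ ?_
    rw [card_union_of_disjoint (hSd 0 1 (by decide)), hS, hS, Fintype.card_fin, Fin.sum_univ_two]
  have hxy0 : L x y ∉ S 0 :=
    (hrow x).1.apply_notMem_of_card_le (by rw [hS, hC]) (hsub 0 x hx)
      (disjoint_right.1 (hCd 0 1 (by decide)) hy)
  have hxy1 : L x y ∉ S 1 :=
    (hcol y).1.apply_notMem_of_card_le (by rw [hS, hR]) (fun x' hx' => hsub 1 x' hx' y hy)
      (disjoint_left.1 (hRd 0 1 (by decide)) hx)
  have : L x y ∈ S 0 ∪ S 1 := hS_union ▸ mem_univ _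
  exact (mem_union.1 this).elim hxy0 hxy1

theorem statement9_general (k a : ℕ) (ha : 1 ≤ a) :
    HasRealization (fun _ : Fin k => a) ↔ k ≠ 2 := by
  refine ⟨?_, fun hk => ?_⟩
  · rintro H rfl
    exact not_hasRealization_of_two ha ha H
  · obtain ⟨K, hK, hd⟩ := exists_isLatin_injective_diag hk
    obtain ⟨A, hA⟩ := exists_isLatin_fin a
    rw [HasRealization, Fin.sum_const, smul_eq_mul]
    exact hasILS_mul hK hd hA

/-- for `k ≥ 1` and `a ≥ 1`, a realization `LS(a^k)` exists if and
only if `k ≠ 2`. -/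
theorem statement9 (k a : ℕ) (hk : 1 ≤ k) (ha : 1 ≤ a) :
    HasRealization (fun _ : Fin k => a) ↔ k ≠ 2 :=
  statement9_general k a ha
end

section
/- For any positive integers h_1 ≥ h_2, there is no realization LS(h_1 h_2), i.e. no latin square of order h_1 + h_2 with two disjoint subsquares of orders h_1 and h_2. -/
/-! A subsquare on rows `R`, columns `C` and symbols `S` uses up every symbol of `S` in each of
its rows and columns, so outside the subsquare those rows and columns avoid `S`. In an
`LS(h₁ h₂)`, the cell in a row of the first subsquare and a column of the second therefore
avoids both `S₀` and `S₁`; but these two disjoint symbol sets of sizes `h₁` and `h₂` exhaust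
all `h₁ + h₂` symbols. -/

open Finset

lemma Function.Injective.apply_notMem_of_mapsTo {β γ : Type*} [DecidableEq γ] {f : β → γ}
    (hf : Function.Injective f) {C : Finset β} {S : Finset γ} (hcard : #S ≤ #C)
    (hmaps : ∀ y ∈ C, f y ∈ S) {y : β} (hy : y ∉ C) : f y ∉ S := by
  have himage : C.image f = S :=
    eq_of_subset_of_card_le (image_subset_iff.mpr hmaps) (by rwa [card_image_of_injective _ hf])
  rw [← himage, mem_image]
  rintro ⟨y', hy', hfy⟩
  exact hy (hf hfy ▸ hy')

lemma Finset.union_eq_univ_of_disjoint_of_card_add {α : Type*} [Fintype α] [DecidableEq α]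
    {A B : Finset α} (hAB : Disjoint A B) (hcard : #A + #B = Fintype.card α) : A ∪ B = univ :=
  eq_univ_of_card _ (by rw [card_union_of_disjoint hAB, hcard])

namespace IsLatinSquare

variable {n : ℕ} {L : Fin n → Fin n → Fin n} {R C S : Finset (Fin n)} {x y : Fin n}

lemma entry_notMem_of_mem_rows (hL : IsLatinSquare L) (hsub : ∀ x ∈ R, ∀ y ∈ C, L x y ∈ S)
    (hcard : #S ≤ #C) (hx : x ∈ R) (hy : y ∉ C) : L x y ∉ S :=
  (hL.1 x).injective.apply_notMem_of_mapsTo hcard (hsub x hx) hy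

lemma entry_notMem_of_mem_cols (hL : IsLatinSquare L) (hsub : ∀ x ∈ R, ∀ y ∈ C, L x y ∈ S)
    (hcard : #S ≤ #R) (hx : x ∉ R) (hy : y ∈ C) : L x y ∉ S :=
  (hL.2 y).injective.apply_notMem_of_mapsTo (f := fun x => L x y) hcard
    (fun x hx => hsub x hx y hy) hx

end IsLatinSquare

/-- for positive integers `h_1 ≥ h_2` there is no realization
`LS(h_1 h_2)`. -/
theorem statement11 (h₁ h₂ : ℕ) (h2pos : 0 < h₂) (hle : h₂ ≤ h₁) :
    ¬ HasRealization ![h₁, h₂] := by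
  rintro ⟨L, hL, R, C, S, hR, hC, hS, hRd, hCd, hSd, hsub⟩
  simp only [Fin.forall_fin_two, Matrix.cons_val_zero, Matrix.cons_val_one] at hR hC hS hsub
  have hSu : S 0 ∪ S 1 = univ := union_eq_univ_of_disjoint_of_card_add (hSd 0 1 (by decide))
    (by simp [hS, Fin.sum_univ_two])
  obtain ⟨x, hx⟩ : (R 0).Nonempty := card_pos.mp (by omega)
  obtain ⟨y, hy⟩ : (C 1).Nonempty := card_pos.mp (by omega)
  have hx₁ : x ∉ R 1 := disjoint_left.mp (hRd 0 1 (by decide)) hx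
  have hy₀ : y ∉ C 0 := disjoint_right.mp (hCd 0 1 (by decide)) hy
  have hnot₀ := hL.entry_notMem_of_mem_rows hsub.1 (by omega) hx hy₀
  have hnot₁ := hL.entry_notMem_of_mem_cols hsub.2 (by omega) hx₁ hy
  simpa [hnot₀, hnot₁] using hSu.ge (mem_univ (L x y))
end

section
/- Let h_1 ≥ h_2 ≥ h_3 > 0 be integers. A realization LS(h_1 h_2 h_3) exists if and only if h_1 = h_2 = h_3. -/
/-!
Let `A` and `B` be the subsquares of orders `h₁` and `h₂`, and take a row `x` of `B`. Inside the
columns of `B` this row already uses every symbol of `B`, and each column of `A` uses up the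
symbols of `A` inside the rows of `A`. So on the `h₁` columns of `A`, row `x` only carries the
`h₃` symbols belonging to neither, whence `h₁ ≤ h₃`. Conversely, the addition table of
`ℤ/3 × ℤ/h` has the diagonal blocks `{i} × ℤ/h` as disjoint subsquares, with symbol blocks
`{2i} × ℤ/h`, which are distinct because `3` is odd.
-/

namespace IsLatinSquare

variable {n : ℕ} {L : Fin n → Fin n → Fin n}

theorem transpose (hL : IsLatinSquare L) : IsLatinSquare fun i j => L j i :=
  ⟨hL.2, hL.1⟩

theorem mem_row_iff (hL : IsLatinSquare L) {C S : Finset (Fin n)} (hCS : C.card = S.card)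
    {x : Fin n} (hrow : ∀ y ∈ C, L x y ∈ S) (y : Fin n) : L x y ∈ S ↔ y ∈ C := by
  have hinj : Function.Injective (L x) := (hL.1 x).1
  have himage : C.image (L x) = S :=
    Finset.eq_of_subset_of_card_le (fun s hs => by
      obtain ⟨y, hy, rfl⟩ := Finset.mem_image.mp hs
      exact hrow y hy) (by rw [Finset.card_image_of_injective _ hinj, hCS])
  rw [← himage, Finset.mem_image]
  exact ⟨fun ⟨y', hy', he⟩ => hinj he ▸ hy', fun hy => ⟨y, hy, rfl⟩⟩

theorem mem_col_iff (hL : IsLatinSquare L) {R S : Finset (Fin n)} (hRS : R.card = S.card)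
    {y : Fin n} (hcol : ∀ x ∈ R, L x y ∈ S) (x : Fin n) : L x y ∈ S ↔ x ∈ R :=
  hL.transpose.mem_row_iff hRS hcol x

theorem of_addEquiv {G : Type*} [AddGroup G] (e : G ≃ Fin n) :
    IsLatinSquare fun u v => e (e.symm u + e.symm v) :=
  ⟨fun u => (e.symm.trans ((Equiv.addLeft (e.symm u)).trans e)).bijective,
    fun v => (e.symm.trans ((Equiv.addRight (e.symm v)).trans e)).bijective⟩

end IsLatinSquare

theorem HasILS.add_add_le {n k : ℕ} {h : Fin k → ℕ} (hILS : HasILS n h) {i j : Fin k}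
    (hij : i ≠ j) (hi : 0 < h i) : h i + h j + h j ≤ n := by
  obtain ⟨L, hL, R, C, S, hR, hC, hS, hRd, hCd, hSd, hsub⟩ := hILS
  obtain ⟨x, hx⟩ := Finset.card_pos.mp (hR i ▸ hi)
  have hinj : Function.Injective (L x) := (hL.1 x).1
  have hfree : Disjoint ((C j).image (L x)) (S i ∪ S j) := by
    refine Finset.disjoint_left.mpr fun s hs hmem => ?_
    obtain ⟨y, hy, rfl⟩ := Finset.mem_image.mp hs
    rcases Finset.mem_union.mp hmem with hSi | hSj
    · have hyi := (hL.mem_row_iff ((hC i).trans (hS i).symm) (hsub i x hx) y).mp hSi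
      exact Finset.disjoint_left.mp (hCd i j hij) hyi hy
    · have hxj := (hL.mem_col_iff ((hR j).trans (hS j).symm)
        (fun x' hx' => hsub j x' hx' y hy) x).mp hSj
      exact Finset.disjoint_left.mp (hRd i j hij) hx hxj
  have hcard := Finset.card_le_univ ((C j).image (L x) ∪ (S i ∪ S j))
  rw [Finset.card_union_of_disjoint hfree, Finset.card_union_of_disjoint (hSd i j hij),
    Finset.card_image_of_injective _ hinj, hC, hS, hS, Fintype.card_fin] at hcard
  omega

theorem Fin.add_self_injective_of_odd {m : ℕ} (hm : Odd m) :
    Function.Injective fun i : Fin m => i + i := by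
  intro i j hij
  have hmod : 2 * (i : ℕ) ≡ 2 * (j : ℕ) [MOD m] := by
    rw [two_mul, two_mul, Nat.ModEq, ← Fin.val_add, ← Fin.val_add]
    exact congrArg Fin.val hij
  exact Fin.ext (Nat.ModEq.eq_of_lt_of_lt
    (Nat.ModEq.cancel_left_of_coprime (Nat.coprime_two_right.mpr hm) hmod) i.isLt j.isLt)

theorem hasRealization_const_of_odd {m h : ℕ} (hm : Odd m) (hh : 0 < h) :
    HasRealization fun _ : Fin m => h := by
  have : NeZero m := ⟨by rintro rfl; simp at hm⟩
  have : NeZero h := ⟨hh.ne'⟩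
  let e : Fin m × Fin h ≃ Fin (∑ _ : Fin m, h) :=
    finProdFinEquiv.trans (finCongr (by simp))
  let block : Fin m → Finset (Fin (∑ _ : Fin m, h)) := fun i =>
    ({i} ×ˢ Finset.univ).map e.toEmbedding
  have hblock_card (i : Fin m) : (block i).card = h := by simp [block]
  have hblock_disjoint {i j : Fin m} (hij : i ≠ j) : Disjoint (block i) (block j) := by
    rw [Finset.disjoint_map, Finset.disjoint_product]
    exact Or.inl (Finset.disjoint_singleton.mpr hij)
  refine ⟨_, IsLatinSquare.of_addEquiv e, block, block, fun i => block (i + i),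
    hblock_card, hblock_card, fun i => hblock_card (i + i), fun i j => hblock_disjoint,
    fun i j => hblock_disjoint,
    fun i j hij => hblock_disjoint ((Fin.add_self_injective_of_odd hm).ne hij), ?_⟩
  intro i x hx y hy
  obtain ⟨⟨a, u⟩, ha, rfl⟩ := Finset.mem_map.mp hx
  obtain ⟨⟨b, v⟩, hb, rfl⟩ := Finset.mem_map.mp hy
  simp only [Finset.mem_product, Finset.mem_singleton] at ha hb
  exact Finset.mem_map.mpr ⟨(i + i, u + v), by simp, by simp [ha.1, hb.1]⟩

/-- for `h_1 ≥ h_2 ≥ h_3 > 0`, a realization `LS(h_1 h_2 h_3)`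
exists if and only if `h_1 = h_2 = h_3`. -/
theorem statement12 (h₁ h₂ h₃ : ℕ) (h3pos : 0 < h₃) (h32 : h₃ ≤ h₂) (h21 : h₂ ≤ h₁) :
    HasRealization ![h₁, h₂, h₃] ↔ (h₁ = h₂ ∧ h₂ = h₃) := by
  constructor
  · intro hreal
    have h13 : h₂ + h₁ + h₁ ≤ ∑ i, ![h₁, h₂, h₃] i :=
      HasILS.add_add_le (i := 1) (j := 0) hreal (by decide) (by simpa using h3pos.trans_le h32)
    simp only [Fin.sum_univ_three, Matrix.cons_val] at h13
    omega
  · rintro ⟨h12, h23⟩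
    have hconst : ![h₃, h₃, h₃] = fun _ => h₃ := by
      funext i; fin_cases i <;> rfl
    rw [h12, h23, hconst]
    exact hasRealization_const_of_odd (by decide) h3pos
end

section
/- Let P, Q, R be partitions of n. For every outline rectangle O associated to (P,Q,R), there exists a latin square L of order n such that the reduction of L modulo (P,Q,R) equals O. -/
/-- For a partition `p = (p_1 … p_k)` of `n`, `blockSet p n i` is the block
`p[i]`: the interval of `p i` consecutive elements of `Fin n` following the
first `p_1 + … + p_{i-1}` elements. -/
def blockSet {k : ℕ} (p : Fin k → ℕ) (n : ℕ) (i : Fin k) : Finset (Fin n) :=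
  Finset.univ.filter fun x =>
    (∑ j ∈ Finset.univ.filter (· < i), p j) ≤ (x : ℕ) ∧
    (x : ℕ) < ∑ j ∈ Finset.univ.filter (· ≤ i), p j

/-- `L` is a realization of the partition `p` in normal form: `L` is a latin
square and, for each `i`, the rows and columns indexed by the block `p[i]`
form a subsquare using exactly the symbols in `p[i]` (as `L` is a latin
square and the blocks have the right sizes, mapping each such cell into
`p[i]` is equivalent to this). -/
def IsNormalFormRealization {k n : ℕ} (p : Fin k → ℕ) (L : Fin n → Fin n → Fin n) : Prop :=
  IsLatinSquare L ∧
  ∀ i : Fin k, ∀ x ∈ blockSet p n i, ∀ y ∈ blockSet p n i, L x y ∈ blockSet p n i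

/-- An outline rectangle associated to partitions `(p, q, r)` (of a common
`n`): a `u × v` array `O` of multisets with elements from `{1,…,t}` (encoded
as `Fin t`) such that the cell `O i j` contains exactly `p i * q j` elements
(with multiplicity), each symbol `l` occurs exactly `p i * r l` times in row
`i`, and each symbol `l` occurs exactly `q j * r l` times in column `j`. -/
def IsOutlineRectangle {u v t : ℕ} (p : Fin u → ℕ) (q : Fin v → ℕ) (r : Fin t → ℕ)
    (O : Fin u → Fin v → Multiset (Fin t)) : Prop :=
  (∀ i j, Multiset.card (O i j) = p i * q j) ∧
  (∀ i l, ∑ j, (O i j).count l = p i * r l) ∧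
  (∀ j l, ∑ i, (O i j).count l = q j * r l)

/-- `O` is the reduction of the latin square `L` modulo `(p, q, r)`: the
`(i, j)` cell of the reduction is the multiset of all entries of `L` in the
rows of block `p[i]` and columns of block `q[j]`, with every symbol lying in
block `r[l]` replaced by `l`.  Equivalently (as multisets are determined by
their counts), for all `i, j, l`, the number of copies of `l` in `O i j`
equals the number of cells `(x, y)` with `x ∈ p[i]`, `y ∈ q[j]` and
`L x y ∈ r[l]`. -/
def IsReduction {n u v t : ℕ} (p : Fin u → ℕ) (q : Fin v → ℕ) (r : Fin t → ℕ)
    (L : Fin n → Fin n → Fin n) (O : Fin u → Fin v → Multiset (Fin t)) : Prop :=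
  ∀ i j l, (O i j).count l =
    ((blockSet p n i ×ˢ blockSet q n j).filter
      (fun xy => L xy.1 xy.2 ∈ blockSet r n l)).card

/-!
Record `O` by its counts `A i j l`: the outline conditions say that the three two-dimensional
margins of `A` are `p i * q j`, `p i * r l` and `q j * r l`. Each slice `A i` is a matrix whose
line sums are `p i` times `q` and `r`; as a bipartite multigraph with its vertices split, it is
`p i`-regular, so Hall's theorem gives a perfect matching, and peeling off matchings decomposes
`A i` into `p i` matrices with line sums `q` and `r`. Handing one of them to each row of the
block `P[i]` refines the first coordinate of `A` to single rows while keeping the block sums.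
Refining rows, columns and symbols in turn produces a `0`–`1` array of order `n` with all line
sums `1`, that is, a latin square, and its reduction is `O` by construction.
-/

open Finset Function

theorem card_filter_comp_equiv {α β : Type*} [Fintype α] [Fintype β] (e : α ≃ β)
    (P : β → Prop) [DecidablePred P] : #{x | P (e x)} = #{y | P y} := by
  simp only [← Fintype.card_subtype]
  exact Fintype.card_congr (e.subtypeEquiv fun _ => Iff.rfl)

theorem card_filter_sigma_fst_eq {ι : Type*} [Fintype ι] [DecidableEq ι] (c : ι → ℕ) (i : ι) :
    #{x : Σ i, Fin (c i) | x.1 = i} = c i := by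
  rw [← Fintype.card_fin (c i), ← card_univ,
    ← card_map (Embedding.sigmaMk (β := fun i => Fin (c i)) i)]
  congr 1
  ext ⟨j, b⟩
  simp only [mem_filter, mem_univ, true_and, mem_map, Embedding.sigmaMk_apply]
  constructor
  · rintro rfl; exact ⟨b, rfl⟩
  · rintro ⟨b, h⟩; cases h; rfl

theorem card_filter_sigma_fst_eq_sum {ι κ : Type*} [Fintype ι] [DecidableEq ι] [DecidableEq κ]
    (c : ι → ℕ) (g : ι → κ) (k : κ) :
    #{x : Σ i, Fin (c i) | g x.1 = k} = ∑ i with g i = k, c i := by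
  calc #{x : Σ i, Fin (c i) | g x.1 = k}
      = #{x : Σ i, Fin (c i) | x.1 ∈ ({i | g i = k} : Finset ι)} := by simp
    _ = ∑ i with g i = k, c i := by
        rw [← sum_card_fiberwise_eq_card_filter]
        exact sum_congr rfl fun i _ => card_filter_sigma_fst_eq c i

theorem card_filter_mem_eq_mul {E X : Type*} [Fintype E] [DecidableEq X] {s : E → X} {d : ℕ}
    (hs : ∀ x, #{e | s e = x} = d) (A : Finset X) : #{e | s e ∈ A} = d * #A := by
  rw [← sum_card_fiberwise_eq_card_filter, sum_const_nat fun x _ => hs x, mul_comm]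

theorem exists_eq_single_of_sum_eq_one {ι : Type*} [Fintype ι] [DecidableEq ι] {f : ι → ℕ}
    (h : ∑ i, f i = 1) : ∃ i, f = Pi.single i 1 := by
  obtain ⟨i, hi⟩ : ∃ i, f i ≠ 0 := by
    by_contra! h0
    simp [h0] at h
  have hrest := add_sum_erase univ f (mem_univ i)
  refine ⟨i, funext fun j => ?_⟩
  by_cases hj : j = i
  · subst hj
    simp only [Pi.single_eq_same]
    omega
  · rw [Pi.single_eq_of_ne hj]
    exact sum_eq_zero_iff.1 (by omega) j (mem_erase.2 ⟨hj, mem_univ j⟩)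

theorem eq_of_sum_eq_one {ι : Type*} [Fintype ι] [DecidableEq ι] {f : ι → ℕ}
    (h : ∑ i, f i = 1) {i i' : ι} (hi : f i = 1) (hi' : f i' = 1) : i = i' := by
  obtain ⟨i₀, rfl⟩ := exists_eq_single_of_sum_eq_one h
  simp only [Pi.single_apply] at hi hi'
  split_ifs at hi hi' with h h'
  exact h.trans h'.symm

theorem exists_perfect_matching_of_regular {E X Y : Type*} [Fintype E] [Fintype X] [Fintype Y]
    [DecidableEq X] [DecidableEq Y] (s : E → X) (t : E → Y) {d : ℕ} (hd : 0 < d)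
    (hs : ∀ x, #{e | s e = x} = d) (ht : ∀ y, #{e | t e = y} = d) :
    ∃ m : X → E, (∀ x, s (m x) = x) ∧ Bijective (t ∘ m) := by
  set N : X → Finset Y := fun x => image t {e | s e = x}
  have hall (A : Finset X) : #A ≤ #(A.biUnion N) := by
    refine Nat.le_of_mul_le_mul_left ?_ hd
    rw [← card_filter_mem_eq_mul hs, ← card_filter_mem_eq_mul ht]
    refine card_le_card fun e he => ?_
    simp only [mem_filter, mem_univ, true_and, mem_biUnion] at he ⊢
    exact ⟨s e, he, mem_image_of_mem t (by simp)⟩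
  obtain ⟨f, hf, hfN⟩ := (all_card_le_biUnion_card_iff_exists_injective N).1 hall
  choose m hm hmf using fun x => by simpa [N] using hfN x
  have hcard : Fintype.card X = Fintype.card Y := by
    have hX := card_filter_mem_eq_mul hs univ
    have hY := card_filter_mem_eq_mul ht univ
    simp only [mem_univ, filter_true, card_univ] at hX hY
    exact Nat.eq_of_mul_eq_mul_left hd (hX.symm.trans hY)
  refine ⟨m, hm, (Fintype.bijective_iff_injective_and_card _).2 ⟨?_, hcard⟩⟩
  simpa [comp_def, hmf] using hf

theorem exists_sigma_lift_of_card_fiber_eq_mul {E α : Type*} [Fintype E] [Fintype α]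
    [DecidableEq α] (f : E → α) (a : α → ℕ) (d : ℕ) (hf : ∀ j, #{e | f e = j} = d * a j) :
    ∃ g : E → Σ j, Fin (a j), (∀ e, (g e).1 = f e) ∧ ∀ x, #{e | g e = x} = d := by
  have hσ (j : α) : Fintype.card {e // f e = j} = Fintype.card (Fin (a j) × Fin d) := by
    rw [Fintype.card_subtype, hf, Fintype.card_prod, Fintype.card_fin, Fintype.card_fin, mul_comm]
  let Φ : E ≃ (Σ j, Fin (a j)) × Fin d :=
    (Equiv.sigmaFiberEquiv f).symm.trans <|
      (Equiv.sigmaCongrRight fun j => Fintype.equivOfCardEq (hσ j)).trans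
        (Equiv.sigmaProdDistrib _ _).symm
  refine ⟨fun e => (Φ e).1, fun e => rfl, fun x => ?_⟩
  rw [card_filter_comp_equiv Φ (·.1 = x),
    show ({z | z.1 = x} : Finset ((Σ j, Fin (a j)) × Fin d)) = {x} ×ˢ univ by
      ext z; simp [Prod.ext_iff, eq_comm]]
  simp

theorem exists_le_sum_eq_of_sum_eq_mul {α β : Type*} [Fintype α] [Fintype β] [DecidableEq α]
    [DecidableEq β] {M : α → β → ℕ} {a : α → ℕ} {b : β → ℕ} {d : ℕ} (hd : 0 < d)
    (hrow : ∀ j, ∑ k, M j k = d * a j) (hcol : ∀ k, ∑ j, M j k = d * b k) :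
    ∃ N : α → β → ℕ, N ≤ M ∧ (∀ j, ∑ k, N j k = a j) ∧ (∀ k, ∑ j, N j k = b k) := by
  -- `E` is the bipartite multigraph with `M j k` edges between `j` and `k`. Splitting each `j`
  -- into `a j` vertices and each `k` into `b k` vertices, all of degree `d`, makes it regular;
  -- `N j k` counts the edges between `j` and `k` in a perfect matching.
  let E := Σ c : α × β, Fin (M c.1 c.2)
  have hE (c : α × β) : #{e : E | e.1 = c} = M c.1 c.2 :=
    card_filter_sigma_fst_eq (fun c : α × β => M c.1 c.2) c
  have hErow (j : α) : #{e : E | e.1.1 = j} = d * a j := by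
    rw [← hrow, card_filter_sigma_fst_eq_sum (fun c : α × β => M c.1 c.2) Prod.fst]
    simp [sum_filter, Fintype.sum_prod_type]
  have hEcol (k : β) : #{e : E | e.1.2 = k} = d * b k := by
    rw [← hcol, card_filter_sigma_fst_eq_sum (fun c : α × β => M c.1 c.2) Prod.snd]
    simp [sum_filter, Fintype.sum_prod_type]
  obtain ⟨gX, hgX, hgX_card⟩ := exists_sigma_lift_of_card_fiber_eq_mul _ a d hErow
  obtain ⟨gY, hgY, hgY_card⟩ := exists_sigma_lift_of_card_fiber_eq_mul _ b d hEcol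
  obtain ⟨m, hm, hbij⟩ := exists_perfect_matching_of_regular gX gY hd hgX_card hgY_card
  refine ⟨fun j k => #{x | x.1 = j ∧ (gY (m x)).1 = k}, fun j k => ?_, fun j => ?_,
    fun k => ?_⟩
  · calc #{x | x.1 = j ∧ (gY (m x)).1 = k} ≤ #{e : E | e.1 = (j, k)} := by
          refine card_le_card_of_injOn m (fun x hx => ?_) (LeftInverse.injective hm).injOn
          simp only [coe_filter, mem_univ, true_and, Set.mem_ofPred_eq] at hx ⊢
          rw [Prod.ext_iff, ← hgX, ← hgY, hm, hx.1, hx.2]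
          exact ⟨rfl, rfl⟩
      _ = M j k := hE (j, k)
  · refine Eq.trans ?_ (card_filter_sigma_fst_eq a j)
    rw [card_eq_sum_card_fiberwise (f := fun x => (gY (m x)).1) (t := univ)
      fun _ _ => mem_univ _]
    simp [filter_filter]
  · refine Eq.trans ?_ (card_filter_sigma_fst_eq b k)
    rw [← card_filter_comp_equiv (Equiv.ofBijective _ hbij),
      card_eq_sum_card_fiberwise (f := Sigma.fst) (t := univ) fun _ _ => mem_univ _]
    simp [filter_filter, and_comm]

theorem exists_decomposition_of_sum_eq_mul {α β : Type*} [Fintype α] [Fintype β]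
    [DecidableEq α] [DecidableEq β] {a : α → ℕ} {b : β → ℕ} (d : ℕ) {M : α → β → ℕ}
    (hrow : ∀ j, ∑ k, M j k = d * a j) (hcol : ∀ k, ∑ j, M j k = d * b k) :
    ∃ F : Fin d → α → β → ℕ,
      (∀ s j, ∑ k, F s j k = a j) ∧ (∀ s k, ∑ j, F s j k = b k) ∧ ∑ s, F s = M := by
  induction d generalizing M with
  | zero =>
    refine ⟨finZeroElim, finZeroElim, finZeroElim, ?_⟩
    ext j k
    simpa [eq_comm] using sum_eq_zero_iff.1 ((hrow j).trans (zero_mul _)) k (mem_univ k)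
  | succ d ih =>
    obtain ⟨N, hNM, hNrow, hNcol⟩ := exists_le_sum_eq_of_sum_eq_mul d.succ_pos hrow hcol
    obtain ⟨F, hFrow, hFcol, hF⟩ := ih (M := M - N)
      (fun j => by
        simp only [Pi.sub_apply]
        rw [sum_tsub_distrib _ fun k _ => hNM j k, hrow, hNrow, add_one_mul,
          add_tsub_cancel_right])
      (fun k => by
        simp only [Pi.sub_apply]
        rw [sum_tsub_distrib _ fun j _ => hNM j k, hcol, hNcol, add_one_mul,
          add_tsub_cancel_right])
    refine ⟨Fin.cons N F, Fin.cons hNrow hFrow, Fin.cons hNcol hFcol, ?_⟩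
    rw [Fin.sum_univ_succ, Fin.cons_zero]
    simp only [Fin.cons_succ, hF, add_tsub_cancel_of_le hNM]

/-- The count form of an outline rectangle: `A i j l` copies of symbol `l` in cell `(i, j)`. -/
structure IsOutlineArray_s14 {κ₁ κ₂ κ₃ : Type*} [Fintype κ₁] [Fintype κ₂] [Fintype κ₃]
    (p : κ₁ → ℕ) (q : κ₂ → ℕ) (r : κ₃ → ℕ) (A : κ₁ → κ₂ → κ₃ → ℕ) : Prop where
  sum_three : ∀ i j, ∑ l, A i j l = p i * q j
  sum_two : ∀ i l, ∑ j, A i j l = p i * r l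
  sum_one : ∀ j l, ∑ i, A i j l = q j * r l

namespace IsOutlineArray_s14

variable {ι κ₁ κ₂ κ₃ : Type*} [Fintype ι] [Fintype κ₁] [Fintype κ₂] [Fintype κ₃]
  {p : κ₁ → ℕ} {q : κ₂ → ℕ} {r : κ₃ → ℕ} {A : κ₁ → κ₂ → κ₃ → ℕ}

theorem rotate (hA : IsOutlineArray_s14 p q r A) : IsOutlineArray_s14 q r p fun j l i => A i j l :=
  ⟨hA.sum_one, fun j i => (hA.sum_three i j).trans (mul_comm _ _),
    fun l i => (hA.sum_two i l).trans (mul_comm _ _)⟩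

theorem exists_refinement [DecidableEq κ₁] [DecidableEq κ₂] [DecidableEq κ₃]
    (hA : IsOutlineArray_s14 p q r A) (π : ι → κ₁) (hπ : ∀ i, #{x | π x = i} = p i) :
    ∃ B : ι → κ₂ → κ₃ → ℕ, IsOutlineArray_s14 1 q r B ∧
      ∀ i j l, ∑ x with π x = i, B x j l = A i j l := by
  choose F hFrow hFcol hF using fun i =>
    exists_decomposition_of_sum_eq_mul (p i) (hA.sum_three i) (hA.sum_two i)
  let σ (i : κ₁) : {x // π x = i} ≃ Fin (p i) :=
    Fintype.equivFinOfCardEq (by rw [Fintype.card_subtype, hπ])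
  let B (x : ι) := F (π x) (σ (π x) ⟨x, rfl⟩)
  have hB (i : κ₁) (j : κ₂) (l : κ₃) : ∑ x with π x = i, B x j l = A i j l := by
    calc ∑ x with π x = i, B x j l = ∑ y : {x // π x = i}, F i (σ i y) j l := by
          rw [sum_subtype (p := fun x => π x = i) _ (by simp)]
          refine sum_congr rfl fun ⟨x, hx⟩ _ => ?_
          subst hx; rfl
      _ = A i j l := by
          rw [Equiv.sum_comp (σ i) fun s => F i s j l, ← hF i]
          simp only [Finset.sum_apply]
  refine ⟨B, ⟨fun x j => ?_, fun x l => ?_, fun j l => ?_⟩, hB⟩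
  · simpa using hFrow (π x) _ j
  · simpa using hFcol (π x) _ l
  · rw [← sum_fiberwise univ π]
    simp only [hB, hA.sum_one]

theorem exists_latinSquare {n : ℕ} {T : Fin n → Fin n → Fin n → ℕ}
    (hT : IsOutlineArray_s14 1 1 1 T) :
    ∃ L : Fin n → Fin n → Fin n, IsLatinSquare L ∧
      ∀ x y z, T x y z = if L x y = z then 1 else 0 := by
  choose L hL using fun x y =>
    exists_eq_single_of_sum_eq_one (by simpa using hT.sum_three x y)
  have hTL (x y z : Fin n) : T x y z = if L x y = z then 1 else 0 := by
    simp only [congrFun (hL x y) z, Pi.single_apply, eq_comm]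
  refine ⟨L, ⟨fun x => ?_, fun y => ?_⟩, hTL⟩
  · refine Finite.injective_iff_bijective.1 fun y y' hy => ?_
    refine eq_of_sum_eq_one (f := fun y => T x y (L x y'))
      (by simpa using hT.sum_two x (L x y')) ?_ ?_
    · simp [hTL, hy]
    · simp [hTL]
  · refine Finite.injective_iff_bijective.1 fun x x' hx => ?_
    refine eq_of_sum_eq_one (f := fun x => T x y (L x' y))
      (by simpa using hT.sum_one y (L x' y)) ?_ ?_
    · simp [hTL, hx]
    · simp [hTL]

end IsOutlineArray_s14

theorem IsOutlineRectangle.isOutlineArray_count {u v t : ℕ} {p : Fin u → ℕ} {q : Fin v → ℕ}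
    {r : Fin t → ℕ} {O : Fin u → Fin v → Multiset (Fin t)} (hO : IsOutlineRectangle p q r O) :
    IsOutlineArray_s14 p q r fun i j l => (O i j).count l :=
  ⟨fun i j => by rw [Multiset.sum_count_eq_card fun _ _ => mem_univ _, hO.1], hO.2.1, hO.2.2⟩

section blockSet

variable {u n : ℕ} (p : Fin u → ℕ) (hpn : ∑ i, p i = n)

def blockIndex (x : Fin n) : Fin u :=
  ((finSigmaFinEquiv.trans (finCongr hpn)).symm x).1

theorem sum_filter_lt_eq_sum_castLE (i : Fin u) :
    ∑ j ∈ univ.filter (· < i), p j = ∑ j : Fin i, p (Fin.castLE i.2.le j) :=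
  (sum_bij (fun j _ => Fin.castLE i.2.le j) (fun j _ => mem_filter.2 ⟨mem_univ _, j.2⟩)
    (fun _ _ _ _ h => Fin.castLE_injective _ h)
    (fun j hj => ⟨⟨j, (mem_filter.1 hj).2⟩, mem_univ _, rfl⟩) (fun _ _ => rfl)).symm

theorem sum_filter_le_eq_sum_filter_lt_add (i : Fin u) :
    ∑ j ∈ univ.filter (· ≤ i), p j = ∑ j ∈ univ.filter (· < i), p j + p i := by
  rw [filter_ge_eq_Iic, filter_gt_eq_Iio, ← Iio_insert, sum_insert (by simp), add_comm]

theorem card_filter_blockIndex (i : Fin u) : #{x | blockIndex p hpn x = i} = p i := by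
  rw [← card_filter_comp_equiv (finSigmaFinEquiv.trans (finCongr hpn))]
  simpa [blockIndex] using card_filter_sigma_fst_eq p i

theorem card_blockSet_le (i : Fin u) : #(blockSet p n i) ≤ p i := by
  calc #(blockSet p n i)
      ≤ #(Ico (∑ j ∈ univ.filter (· < i), p j) (∑ j ∈ univ.filter (· ≤ i), p j)) :=
        card_le_card_of_injOn Fin.val (fun x hx => by simpa [blockSet] using hx)
          Fin.val_injective.injOn
    _ = p i := by simp [sum_filter_le_eq_sum_filter_lt_add]

theorem blockSet_eq_filter_blockIndex (i : Fin u) :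
    blockSet p n i = ({x | blockIndex p hpn x = i} : Finset (Fin n)) := by
  symm
  refine eq_of_subset_of_card_le (fun x hx => ?_) ?_
  · obtain ⟨⟨i', s⟩, rfl⟩ := (finSigmaFinEquiv.trans (finCongr hpn)).surjective x
    obtain rfl : i' = i := by simpa [blockIndex] using hx
    simp only [blockSet, mem_filter, mem_univ, true_and, Equiv.trans_apply, finCongr_apply,
      Fin.val_cast, finSigmaFinEquiv_apply, sum_filter_le_eq_sum_filter_lt_add,
      sum_filter_lt_eq_sum_castLE]
    omega
  · rw [card_filter_blockIndex]
    exact card_blockSet_le p i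

end blockSet

theorem statement14_general (n u v t : ℕ) (p : Fin u → ℕ) (q : Fin v → ℕ) (r : Fin t → ℕ)
    (hpn : ∑ i, p i = n) (hqn : ∑ j, q j = n) (hrn : ∑ l, r l = n)
    (O : Fin u → Fin v → Multiset (Fin t))
    (hO : IsOutlineRectangle p q r O) :
    ∃ L : Fin n → Fin n → Fin n, IsLatinSquare L ∧ IsReduction p q r L O := by
  obtain ⟨B₁, hB₁, hA₁⟩ :=
    hO.isOutlineArray_count.exists_refinement _ (card_filter_blockIndex p hpn)
  obtain ⟨B₂, hB₂, hA₂⟩ := hB₁.rotate.exists_refinement _ (card_filter_blockIndex q hqn)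
  obtain ⟨B₃, hB₃, hA₃⟩ := hB₂.rotate.exists_refinement _ (card_filter_blockIndex r hrn)
  obtain ⟨L, hL, hLB₃⟩ := hB₃.rotate.exists_latinSquare
  refine ⟨L, hL, fun i j l => ?_⟩
  calc (O i j).count l
      = ∑ x ∈ blockSet p n i, ∑ y ∈ blockSet q n j, ∑ z ∈ blockSet r n l, B₃ z x y := by
        simp only [blockSet_eq_filter_blockIndex p hpn, blockSet_eq_filter_blockIndex q hqn,
          blockSet_eq_filter_blockIndex r hrn, hA₁, hA₂, hA₃]
    _ = #{xy ∈ blockSet p n i ×ˢ blockSet q n j | L xy.1 xy.2 ∈ blockSet r n l} := by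
        rw [card_filter, sum_product]
        simp [hLB₃]

/-- Hilton: let `p, q, r` be partitions of `n`.  Every outline
rectangle `O` associated to `(p, q, r)` lifts to a latin square `L` of order
`n` whose reduction modulo `(p, q, r)` equals `O`. -/
theorem statement14 (n u v t : ℕ) (p : Fin u → ℕ) (q : Fin v → ℕ) (r : Fin t → ℕ)
    (hp : ∀ i, 0 < p i) (hq : ∀ j, 0 < q j) (hr : ∀ l, 0 < r l)
    (hpn : ∑ i, p i = n) (hqn : ∑ j, q j = n) (hrn : ∑ l, r l = n)
    (O : Fin u → Fin v → Multiset (Fin t))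
    (hO : IsOutlineRectangle p q r O) :
    ∃ L : Fin n → Fin n → Fin n, IsLatinSquare L ∧ IsReduction p q r L O :=
  statement14_general n u v t p q r hpn hqn hrn O hO
end

section
/- Let P = (h_1 … h_k) be a partition of n, and let O be an outline square associated to P such that for every i ∈ {1,…,k} the cell O(i,i) consists of h_i^2 copies of symbol i. Then there exists a latin square L of order n whose reduction modulo (P,P,P) equals O, and L is a realization of P in normal form. -/
/-!
Every outline is the reduction of a latin square (Hilton's amalgamation theorem), proved by
refining the classes of rows, columns and symbols one element at a time. To split one element
off a row class of size `D`, the counts of that class, whose margins are `D` times the column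
and symbol class sizes, must contain a sub-array whose margins are exactly those sizes; blowing
each column and symbol class up into vertices of degree `D` turns this into a perfect matching
of a regular bipartite multigraph, which Hall's theorem provides. Columns and symbols are split
the same way after permuting the three coordinates. When every class is a singleton, an outline
is a 0/1 array with all line sums 1, i.e. a latin square. Taking the blocks of the partition as
classes, the diagonal condition forces the block `P[i] × P[i]` to use only symbols of `P[i]`.
-/

namespace LatinSquare

open Finset Function

section Margins

variable {β γ : Type*} [Fintype β] [Fintype γ]

lemma exists_le_sum_eq_of_le_sum (g : γ → ℕ) {D : ℕ} (hD : D ≤ ∑ x, g x) :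
    ∃ h : γ → ℕ, h ≤ g ∧ ∑ x, h x = D := by
  classical
  induction D with
  | zero => exact ⟨0, fun _ => Nat.zero_le _, by simp⟩
  | succ D ih =>
    obtain ⟨h, hle, hsum⟩ := ih (by omega)
    obtain ⟨x0, hx0⟩ : ∃ x, h x < g x := by
      by_contra! hge
      have := sum_le_sum fun x (_ : x ∈ univ) => hge x
      omega
    refine ⟨h + Pi.single x0 1, fun x => ?_, ?_⟩
    · by_cases hx : x = x0
      · subst hx; simpa using hx0
      · simpa [hx] using hle x
    · simp [sum_add_distrib, hsum]

lemma exists_rows_of_sum_eq_mul (g : γ → ℕ) (D : ℕ) {q : ℕ} (hg : ∑ x, g x = D * q) :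
    ∃ E : Fin q → γ → ℕ, (∀ s, ∑ x, E s x = D) ∧ ∀ x, ∑ s, E s x = g x := by
  induction q generalizing g with
  | zero =>
    refine ⟨finZeroElim, finZeroElim, fun x => ?_⟩
    simp only [mul_zero, sum_eq_zero_iff, mem_univ, true_implies] at hg
    simp [hg x]
  | succ q ih =>
    obtain ⟨h, hle, hsum⟩ := exists_le_sum_eq_of_le_sum g (D := D) (by rw [hg]; nlinarith)
    obtain ⟨E, hE, hEg⟩ := ih (g - h) (by
      rw [Pi.sub_def, sum_tsub_distrib _ fun x _ => hle x, hg, hsum, mul_add_one,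
        Nat.add_sub_cancel])
    refine ⟨Fin.cons h E, Fin.cons hsum hE, fun x => ?_⟩
    rw [Fin.sum_univ_succ]
    simp only [Fin.cons_zero, Fin.cons_succ, hEg x, Pi.sub_apply]
    have : h x ≤ g x := hle x
    omega

lemma exists_bijective_of_regular (c : β → γ → ℕ) {D : ℕ} (hD : 0 < D)
    (hrow : ∀ b, ∑ x, c b x = D) (hcol : ∀ x, ∑ b, c b x = D) :
    ∃ f : β → γ, Bijective f ∧ ∀ b, 0 < c b (f b) := by
  classical
  let t : β → Finset γ := fun b => {x | 0 < c b x}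
  have hall : ∀ s : Finset β, #s ≤ #(s.biUnion t) := by
    intro s
    refine Nat.le_of_mul_le_mul_left ?_ hD
    calc D * #s = ∑ b ∈ s, ∑ x ∈ s.biUnion t, c b x := by
          rw [mul_comm, ← smul_eq_mul, ← sum_const]
          refine sum_congr rfl fun b hb => ?_
          rw [← hrow b]
          refine (sum_subset (subset_univ _) fun x _ hx => ?_).symm
          by_contra hc
          exact hx (mem_biUnion.2 ⟨b, hb, by simp [t, Nat.pos_of_ne_zero hc]⟩)
      _ ≤ ∑ x ∈ s.biUnion t, ∑ b, c b x := by
          rw [sum_comm]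
          exact sum_le_sum fun x _ => sum_le_sum_of_subset (subset_univ s)
      _ = D * #(s.biUnion t) := by simp [hcol, mul_comm]
  obtain ⟨f, hinj, hmem⟩ := (all_card_le_biUnion_card_iff_exists_injective t).1 hall
  have hcard : Fintype.card β = Fintype.card γ := by
    have h := sum_comm (s := univ) (t := univ) (f := c)
    simp only [hrow, hcol, sum_const, smul_eq_mul, card_univ] at h
    exact Nat.eq_of_mul_eq_mul_right hD h
  exact ⟨f, (Fintype.bijective_iff_injective_and_card f).2 ⟨hinj, hcard⟩,
    fun b => by simpa [t] using hmem b⟩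

lemma exists_le_margins (c : β → γ → ℕ) (Q : β → ℕ) (R : γ → ℕ) {D : ℕ} (hD : 0 < D)
    (hrow : ∀ b, ∑ x, c b x = D * Q b) (hcol : ∀ x, ∑ b, c b x = D * R x) :
    ∃ d : β → γ → ℕ, d ≤ c ∧ (∀ b, ∑ x, d b x = Q b) ∧ ∀ x, ∑ b, d b x = R x := by
  classical
  -- Blow up row `b` into `Q b` rows and column `x` into `R x` columns, all of degree `D`;
  -- a perfect matching of the blown-up multigraph collapses to `d`.
  choose E hE hEc using fun b => exists_rows_of_sum_eq_mul (c b) D (hrow b)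
  let c₁ : (Σ b, Fin (Q b)) → γ → ℕ := fun w x => E w.1 w.2 x
  have hc₁ : ∀ x, ∑ w, c₁ w x = D * R x := fun x => by
    rw [Fintype.sum_sigma, ← hcol x]
    exact sum_congr rfl fun b _ => hEc b x
  choose F hF hFc using fun x => exists_rows_of_sum_eq_mul (fun w => c₁ w x) D (hc₁ x)
  let c₂ : (Σ b, Fin (Q b)) → (Σ x, Fin (R x)) → ℕ := fun w y => F y.1 y.2 w
  obtain ⟨f, hf, hpos⟩ := exists_bijective_of_regular c₂ hD
    (fun w => by rw [Fintype.sum_sigma]; simp only [c₂, hFc]; exact hE w.1 w.2)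
    (fun y => hF y.1 y.2)
  refine ⟨fun b x => ∑ s, if (f ⟨b, s⟩).1 = x then 1 else 0, fun b x => ?_, fun b => ?_,
    fun x => ?_⟩
  · calc ∑ s, (if (f ⟨b, s⟩).1 = x then 1 else 0) ≤ ∑ s, c₁ ⟨b, s⟩ x := by
          refine sum_le_sum fun s _ => ?_
          split_ifs with h
          · have hs := hpos ⟨b, s⟩
            rcases hfw : f ⟨b, s⟩ with ⟨x', s'⟩
            rw [hfw] at h hs
            subst h
            rw [← hFc x' ⟨b, s⟩]
            exact le_trans hs (single_le_sum (f := fun s' => c₂ ⟨b, s⟩ ⟨x', s'⟩)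
              (fun _ _ => Nat.zero_le _) (mem_univ s'))
          · exact Nat.zero_le _
      _ = c b x := hEc b x
  · rw [sum_comm]
    simp
  · rw [← Fintype.sum_sigma (fun w => if (f w).1 = x then 1 else 0),
      hf.sum_comp (fun y => if y.1 = x then 1 else 0), Fintype.sum_sigma,
      Fintype.sum_eq_single x fun x' hx' => by simp [hx']]
    simp

end Margins

section Outline

variable {I J K : Type*} [Fintype I] [Fintype J] [Fintype K]

/-- An outline rectangle associated to `(P, Q, R)`, with the multiset in cell `(i, j)` recorded
by its multiplicities `N i j ·`. -/
structure IsOutline (P : I → ℕ) (Q : J → ℕ) (R : K → ℕ) (N : I → J → K → ℕ) : Prop where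
  sum_cell : ∀ i j, ∑ l, N i j l = P i * Q j
  sum_row : ∀ i l, ∑ j, N i j l = P i * R l
  sum_col : ∀ j l, ∑ i, N i j l = Q j * R l

variable {P : I → ℕ} {Q : J → ℕ} {R : K → ℕ} {N : I → J → K → ℕ}

lemma IsOutline.transpose (hN : IsOutline P Q R N) :
    IsOutline Q P R fun j i l => N i j l :=
  ⟨fun j i => (hN.sum_cell i j).trans (mul_comm _ _), hN.sum_col, hN.sum_row⟩

lemma IsOutline.swapRowSymbol (hN : IsOutline P Q R N) :
    IsOutline R Q P fun l j i => N i j l :=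
  ⟨fun l j => (hN.sum_col j l).trans (mul_comm _ _),
    fun l i => (hN.sum_row i l).trans (mul_comm _ _),
    fun j i => (hN.sum_cell i j).trans (mul_comm _ _)⟩

/-- Splitting a single row off the row class `i0`: the refined row classes are indexed by
`Option I`, with `none` the split-off row. -/
theorem IsOutline.exists_split [DecidableEq I] (hN : IsOutline P Q R N) (i0 : I)
    {P' : Option I → ℕ} (hP' : ∀ i, P i = P' (some i) + if i0 = i then P' none else 0)
    (hnone : P' none = 1) :
    ∃ N' : Option I → J → K → ℕ, IsOutline P' Q R N' ∧
      ∀ i j l, N i j l = N' (some i) j l + if i0 = i then N' none j l else 0 := by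
  have hpos : 0 < P i0 := by simp [hP' i0, hnone]
  obtain ⟨d, hd, hdcell, hdrow⟩ :=
    exists_le_margins (N i0) Q R hpos (hN.sum_cell i0) (hN.sum_row i0)
  let N' : Option I → J → K → ℕ := fun o j l =>
    o.elim (d j l) fun i => N i j l - if i0 = i then d j l else 0
  have hsplit : ∀ i j l, N i j l = N' (some i) j l + if i0 = i then N' none j l else 0 := by
    intro i j l
    split_ifs with h
    · subst h
      have : d j l ≤ N i0 j l := hd j l
      simp only [N', Option.elim, if_true]
      omega
    · simp [N', h]
  have hcell_none : ∀ j, ∑ l, N' none j l = Q j := hdcell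
  have hrow_none : ∀ l, ∑ j, N' none j l = R l := hdrow
  refine ⟨N', ⟨fun o j => ?_, fun o l => ?_, fun j l => ?_⟩, hsplit⟩
  · cases o with
    | none => rw [hcell_none, hnone, one_mul]
    | some i =>
      have h := hN.sum_cell i j
      simp only [hsplit i j, sum_add_distrib, sum_ite_irrel, sum_const_zero, hP' i,
        hcell_none, hnone] at h
      split_ifs at h <;> linarith
  · cases o with
    | none => rw [hrow_none, hnone, one_mul]
    | some i =>
      have h := hN.sum_row i l
      simp only [hsplit i _ l, sum_add_distrib, sum_ite_irrel, sum_const_zero, hP' i,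
        hrow_none, hnone] at h
      split_ifs at h <;> linarith
  · rw [Fintype.sum_option, ← hN.sum_col j l]
    simp only [hsplit _ j l, sum_add_distrib, sum_ite_eq, mem_univ, if_true]
    ring

lemma IsOutline.of_isOutlineRectangle {u v t : ℕ} {p : Fin u → ℕ} {q : Fin v → ℕ}
    {r : Fin t → ℕ} {O : Fin u → Fin v → Multiset (Fin t)} (hO : IsOutlineRectangle p q r O) :
    IsOutline p q r fun i j l => (O i j).count l :=
  ⟨fun i j => by rw [Multiset.sum_count_eq_card fun _ _ => mem_univ _, hO.1], hO.2.1, hO.2.2⟩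

end Outline

section Fiber

variable {X I : Type*} [DecidableEq X]

def splitOff (a : X → I) (x0 : X) : X → Option I := fun x => if x = x0 then none else some (a x)

variable {a : X → I} {x0 : X}

lemma splitOff_surjective (ha : Surjective a) {x1 : X} (hx1 : x1 ≠ x0) (h : a x1 = a x0) :
    Surjective (splitOff a x0) := by
  rintro (_ | i)
  · exact ⟨x0, by simp [splitOff]⟩
  · obtain ⟨x, rfl⟩ := ha i
    by_cases hx : x = x0
    · exact ⟨x1, by simp [splitOff, hx1, h, hx]⟩
    · exact ⟨x, by simp [splitOff, hx]⟩

variable [Fintype X] [DecidableEq I]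

def fiber (a : X → I) (i : I) : Finset X := {x | a x = i}

lemma fiber_apply_of_injective (ha : Injective a) (x : X) : fiber a (a x) = {x} := by
  ext y
  simp [fiber, ha.eq_iff]

lemma fiber_splitOff_none : fiber (splitOff a x0) none = {x0} := by
  ext x
  by_cases hx : x = x0 <;> simp [fiber, splitOff, hx]

lemma fiber_splitOff_some (i : I) : fiber (splitOff a x0) (some i) = (fiber a i).erase x0 := by
  ext x
  by_cases hx : x = x0 <;> simp [fiber, splitOff, hx]

lemma sum_fiber_eq_sum_fiber_splitOff {M : Type*} [AddCommMonoid M] (f : X → M) (i : I) :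
    ∑ x ∈ fiber a i, f x = ∑ x ∈ fiber (splitOff a x0) (some i), f x +
      if a x0 = i then ∑ x ∈ fiber (splitOff a x0) none, f x else 0 := by
  rw [fiber_splitOff_some, fiber_splitOff_none, sum_singleton]
  split_ifs with h
  · exact (sum_erase_add _ _ (by simp [fiber, h])).symm
  · rw [erase_eq_of_notMem (by simp [fiber, h]), add_zero]

def fiberCard (a : X → I) (i : I) : ℕ := #(fiber a i)

lemma fiberCard_apply_of_injective (ha : Injective a) (x : X) : fiberCard a (a x) = 1 := by
  rw [fiberCard, fiber_apply_of_injective ha, card_singleton]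

lemma fiberCard_splitOff_none : fiberCard (splitOff a x0) none = 1 := by
  rw [fiberCard, fiber_splitOff_none, card_singleton]

lemma fiberCard_eq_fiberCard_splitOff (i : I) :
    fiberCard a i = fiberCard (splitOff a x0) (some i) +
      if a x0 = i then fiberCard (splitOff a x0) none else 0 := by
  simp only [fiberCard, card_eq_sum_ones]
  exact sum_fiber_eq_sum_fiber_splitOff _ i

end Fiber

section Reduction

variable {X I J K : Type*} [Fintype X] [DecidableEq X] [DecidableEq I] [DecidableEq J]
  [DecidableEq K]

/-- The cell counts of `IsReduction`, with the row, column and symbol classes given as the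
fibers of `a`, `b` and `c` instead of as blocks of partitions. -/
def reductionCount (a : X → I) (b : X → J) (c : X → K) (L : X → X → X) (i : I) (j : J)
    (l : K) : ℕ :=
  #((fiber a i ×ˢ fiber b j).filter fun z => c (L z.1 z.2) = l)

variable {a : X → I} {b : X → J} {c : X → K} {L : X → X → X}

lemma reductionCount_eq_sum (i : I) (j : J) (l : K) :
    reductionCount a b c L i j l =
      ∑ x ∈ fiber a i, ∑ y ∈ fiber b j, ∑ s ∈ fiber c l, if L x y = s then 1 else 0 := by
  rw [reductionCount, card_filter, sum_product]
  simp [fiber, sum_ite_eq]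

lemma reductionCount_splitOff_row (x0 : X) (i : I) (j : J) (l : K) :
    reductionCount a b c L i j l = reductionCount (splitOff a x0) b c L (some i) j l +
      if a x0 = i then reductionCount (splitOff a x0) b c L none j l else 0 := by
  simp only [reductionCount_eq_sum]
  exact sum_fiber_eq_sum_fiber_splitOff _ i

lemma reductionCount_splitOff_col (x0 : X) (i : I) (j : J) (l : K) :
    reductionCount a b c L i j l = reductionCount a (splitOff b x0) c L i (some j) l +
      if b x0 = j then reductionCount a (splitOff b x0) c L i none l else 0 := by
  simp only [reductionCount_eq_sum, sum_fiber_eq_sum_fiber_splitOff (a := b) (x0 := x0),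
    sum_add_distrib, sum_ite_irrel, sum_const_zero]

lemma reductionCount_splitOff_symbol (x0 : X) (i : I) (j : J) (l : K) :
    reductionCount a b c L i j l = reductionCount a b (splitOff c x0) L i j (some l) +
      if c x0 = l then reductionCount a b (splitOff c x0) L i j none else 0 := by
  simp only [reductionCount_eq_sum, sum_fiber_eq_sum_fiber_splitOff (a := c) (x0 := x0),
    sum_add_distrib, sum_ite_irrel, sum_const_zero]

end Reduction

section Refinement

variable {X I J K : Type*} [Fintype X] [DecidableEq X] [Fintype I] [Fintype J] [Fintype K]
  [DecidableEq I] [DecidableEq J] [DecidableEq K] {a : X → I} {b : X → J} {c : X → K}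
  {N : I → J → K → ℕ}

lemma IsOutline.exists_splitOff_row
    (hN : IsOutline (fiberCard a) (fiberCard b) (fiberCard c) N) (x0 : X) :
    ∃ N', IsOutline (fiberCard (splitOff a x0)) (fiberCard b) (fiberCard c) N' ∧
      ∀ L, (∀ i j l, reductionCount (splitOff a x0) b c L i j l = N' i j l) →
        ∀ i j l, reductionCount a b c L i j l = N i j l := by
  obtain ⟨N', hN', hsplit⟩ := hN.exists_split (a x0) (P' := fiberCard (splitOff a x0))
    fiberCard_eq_fiberCard_splitOff fiberCard_splitOff_none
  exact ⟨N', hN', fun L hL i j l => by rw [reductionCount_splitOff_row x0, hL, hL, hsplit]⟩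

lemma IsOutline.exists_splitOff_col
    (hN : IsOutline (fiberCard a) (fiberCard b) (fiberCard c) N) (x0 : X) :
    ∃ N', IsOutline (fiberCard a) (fiberCard (splitOff b x0)) (fiberCard c) N' ∧
      ∀ L, (∀ i j l, reductionCount a (splitOff b x0) c L i j l = N' i j l) →
        ∀ i j l, reductionCount a b c L i j l = N i j l := by
  obtain ⟨N', hN', hsplit⟩ := hN.transpose.exists_split (b x0)
    (P' := fiberCard (splitOff b x0)) fiberCard_eq_fiberCard_splitOff
    fiberCard_splitOff_none
  exact ⟨fun i j l => N' j i l, hN'.transpose,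
    fun L hL i j l => by rw [reductionCount_splitOff_col x0, hL, hL, hsplit]⟩

lemma IsOutline.exists_splitOff_symbol
    (hN : IsOutline (fiberCard a) (fiberCard b) (fiberCard c) N) (x0 : X) :
    ∃ N', IsOutline (fiberCard a) (fiberCard b) (fiberCard (splitOff c x0)) N' ∧
      ∀ L, (∀ i j l, reductionCount a b (splitOff c x0) L i j l = N' i j l) →
        ∀ i j l, reductionCount a b c L i j l = N i j l := by
  obtain ⟨N', hN', hsplit⟩ := hN.swapRowSymbol.exists_split (c x0)
    (P' := fiberCard (splitOff c x0)) fiberCard_eq_fiberCard_splitOff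
    fiberCard_splitOff_none
  exact ⟨fun i j l => N' l j i, hN'.swapRowSymbol,
    fun L hL i j l => by rw [reductionCount_splitOff_symbol x0, hL, hL, hsplit]⟩

end Refinement

lemma exists_eq_ite_of_sum_eq_one {α : Type*} [Fintype α] [DecidableEq α] {f : α → ℕ}
    (hf : ∑ x, f x = 1) : ∃ a, ∀ b, f b = if a = b then 1 else 0 := by
  obtain ⟨a, -, ha⟩ := exists_ne_zero_of_sum_ne_zero (hf.trans_ne one_ne_zero)
  refine ⟨a, fun b => ?_⟩
  split_ifs with hab
  · subst hab
    have := single_le_sum (fun x _ => Nat.zero_le (f x)) (mem_univ a)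
    omega
  · have := sum_le_sum_of_subset (f := f) (subset_univ {a, b})
    rw [sum_pair hab] at this
    omega

lemma exists_latinSquare_of_sum_eq_one {n : ℕ} (M : Fin n → Fin n → Fin n → ℕ)
    (hcell : ∀ x y, ∑ s, M x y s = 1) (hrow : ∀ x s, ∑ y, M x y s = 1)
    (hcol : ∀ y s, ∑ x, M x y s = 1) :
    ∃ L, IsLatinSquare L ∧ ∀ x y s, M x y s = if L x y = s then 1 else 0 := by
  choose L hL using fun x y => exists_eq_ite_of_sum_eq_one (hcell x y)
  refine ⟨L, ⟨fun x => ?_, fun y => ?_⟩, hL⟩ <;> rw [← Finite.injective_iff_bijective]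
  · intro y y' hyy'
    obtain ⟨y₀, hy₀⟩ := exists_eq_ite_of_sum_eq_one (hrow x (L x y))
    have hy : y₀ = y := by simpa [hL] using hy₀ y
    have hy' : y₀ = y' := by simpa [hL, hyy'] using hy₀ y'
    exact hy.symm.trans hy'
  · intro x x' hxx'
    obtain ⟨x₀, hx₀⟩ := exists_eq_ite_of_sum_eq_one (hcol y (L x y))
    have hx : x₀ = x := by simpa [hL] using hx₀ x
    have hx' : x₀ = x' := by simpa [hL, hxx'] using hx₀ x'
    exact hx.symm.trans hx'

lemma exists_latinSquare_of_bijective {n : ℕ} {I J K : Type*} [Fintype I] [Fintype J]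
    [Fintype K] [DecidableEq I] [DecidableEq J] [DecidableEq K] {a : Fin n → I} {b : Fin n → J}
    {c : Fin n → K} {N : I → J → K → ℕ} (ha : Bijective a) (hb : Bijective b) (hc : Bijective c)
    (hN : IsOutline (fiberCard a) (fiberCard b) (fiberCard c) N) :
    ∃ L, IsLatinSquare L ∧ ∀ i j l, reductionCount a b c L i j l = N i j l := by
  obtain ⟨L, hL, hLN⟩ := exists_latinSquare_of_sum_eq_one (fun x y s => N (a x) (b y) (c s))
    (fun x y => by
      rw [hc.sum_comp (N (a x) (b y)), hN.sum_cell, fiberCard_apply_of_injective ha.1,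
        fiberCard_apply_of_injective hb.1])
    (fun x s => by
      rw [hb.sum_comp fun j => N (a x) j (c s), hN.sum_row, fiberCard_apply_of_injective ha.1,
        fiberCard_apply_of_injective hc.1])
    (fun y s => by
      rw [ha.sum_comp fun i => N i (b y) (c s), hN.sum_col, fiberCard_apply_of_injective hb.1,
        fiberCard_apply_of_injective hc.1])
  refine ⟨L, hL, fun i j l => ?_⟩
  obtain ⟨x, rfl⟩ := ha.2 i
  obtain ⟨y, rfl⟩ := hb.2 j
  obtain ⟨s, rfl⟩ := hc.2 l
  rw [reductionCount_eq_sum, fiber_apply_of_injective ha.1, fiber_apply_of_injective hb.1,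
    fiber_apply_of_injective hc.1, hLN]
  simp only [sum_singleton]

theorem exists_latinSquare_reductionCount_eq {n : ℕ} {I J K : Type*} [Fintype I] [Fintype J]
    [Fintype K] [DecidableEq I] [DecidableEq J] [DecidableEq K] {a : Fin n → I} {b : Fin n → J}
    {c : Fin n → K} {N : I → J → K → ℕ} (ha : Surjective a) (hb : Surjective b)
    (hc : Surjective c) (hN : IsOutline (fiberCard a) (fiberCard b) (fiberCard c) N) :
    ∃ L, IsLatinSquare L ∧ ∀ i j l, reductionCount a b c L i j l = N i j l := by
  by_cases hinj : Injective a ∧ Injective b ∧ Injective c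
  · exact exists_latinSquare_of_bijective ⟨hinj.1, ha⟩ ⟨hinj.2.1, hb⟩ ⟨hinj.2.2, hc⟩ hN
  rcases not_and_or.1 hinj with hna | hinj
  · obtain ⟨x1, x0, h, hne⟩ := not_injective_iff.1 hna
    obtain ⟨N', hN', hred⟩ := hN.exists_splitOff_row x0
    obtain ⟨L, hL, hLN⟩ :=
      exists_latinSquare_reductionCount_eq (splitOff_surjective ha hne h) hb hc hN'
    exact ⟨L, hL, hred L hLN⟩
  rcases not_and_or.1 hinj with hnb | hnc
  · obtain ⟨x1, x0, h, hne⟩ := not_injective_iff.1 hnb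
    obtain ⟨N', hN', hred⟩ := hN.exists_splitOff_col x0
    obtain ⟨L, hL, hLN⟩ :=
      exists_latinSquare_reductionCount_eq ha (splitOff_surjective hb hne h) hc hN'
    exact ⟨L, hL, hred L hLN⟩
  · obtain ⟨x1, x0, h, hne⟩ := not_injective_iff.1 hnc
    obtain ⟨N', hN', hred⟩ := hN.exists_splitOff_symbol x0
    obtain ⟨L, hL, hLN⟩ :=
      exists_latinSquare_reductionCount_eq ha hb (splitOff_surjective hc hne h) hN'
    exact ⟨L, hL, hred L hLN⟩
termination_by (n - Fintype.card I) + (n - Fintype.card J) + (n - Fintype.card K)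
decreasing_by
  all_goals
    have := Fintype.card_le_of_surjective a ha
    have := Fintype.card_le_of_surjective b hb
    have := Fintype.card_le_of_surjective c hc
  · have := Fintype.card_lt_of_surjective_not_injective a ha hna
    simp only [Fintype.card_option, Fintype.card_fin] at *
    omega
  · have := Fintype.card_lt_of_surjective_not_injective b hb hnb
    simp only [Fintype.card_option, Fintype.card_fin] at *
    omega
  · have := Fintype.card_lt_of_surjective_not_injective c hc hnc
    simp only [Fintype.card_option, Fintype.card_fin] at *
    omega

section Blocks

variable {k n : ℕ} (p : Fin k → ℕ)

lemma sum_filter_le_eq_sum_filter_lt_add (i : Fin k) :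
    ∑ j ∈ univ.filter (· ≤ i), p j = ∑ j ∈ univ.filter (· < i), p j + p i := by
  rw [filter_ge_eq_Iic, filter_gt_eq_Iio, ← Iio_insert, sum_insert (by simp), add_comm]

lemma card_blockSet (hpn : ∑ i, p i = n) (i : Fin k) : #(blockSet p n i) = p i := by
  set A := ∑ j ∈ univ.filter (· < i), p j
  have hA : A + p i ≤ n := by
    rw [← sum_filter_le_eq_sum_filter_lt_add, ← hpn]
    exact sum_le_sum_of_subset (subset_univ _)
  have hval : (blockSet p n i).map Fin.valEmbedding = Ico A (A + p i) := by
    ext m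
    simp only [blockSet, sum_filter_le_eq_sum_filter_lt_add, mem_map, mem_filter, mem_univ,
      true_and, Fin.valEmbedding_apply, mem_Ico]
    exact ⟨fun ⟨x, hx, hxm⟩ => hxm ▸ hx, fun hm => ⟨⟨m, by omega⟩, hm, rfl⟩⟩
  rw [← card_map, hval, Nat.card_Ico, Nat.add_sub_cancel_left]

lemma disjoint_blockSet {i i' : Fin k} (h : i < i') :
    Disjoint (blockSet p n i) (blockSet p n i') := by
  have hle : ∑ j ∈ univ.filter (· ≤ i), p j ≤ ∑ j ∈ univ.filter (· < i'), p j :=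
    sum_le_sum_of_subset fun j => by simpa using fun hj => hj.trans_lt h
  rw [disjoint_left]
  intro x hx hx'
  simp only [blockSet, mem_filter, mem_univ, true_and] at hx hx'
  omega

lemma exists_fiber_eq_blockSet (hpn : ∑ i, p i = n) :
    ∃ f : Fin n → Fin k, ∀ i, fiber f i = blockSet p n i := by
  have hdisj : (↑(univ : Finset (Fin k)) : Set (Fin k)).PairwiseDisjoint (blockSet p n) := by
    intro i _ i' _ h
    rcases h.lt_or_gt with h | h
    · exact disjoint_blockSet p h
    · exact (disjoint_blockSet p h).symm
  have hcover : univ.biUnion (blockSet p n) = univ := by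
    refine eq_univ_of_card _ ?_
    rw [card_biUnion hdisj, sum_congr rfl fun i _ => card_blockSet p hpn i, hpn,
      Fintype.card_fin]
  choose f hf using fun x => mem_biUnion.1 (hcover.symm ▸ mem_univ x : x ∈ univ.biUnion _)
  refine ⟨f, fun i => ?_⟩
  ext x
  simp only [fiber, mem_filter, mem_univ, true_and]
  refine ⟨fun h => h ▸ (hf x).2, fun hx => ?_⟩
  by_contra hne
  exact disjoint_left.1 (hdisj (mem_univ _) (mem_univ _) hne) (hf x).2 hx

end Blocks

end LatinSquare

open LatinSquare Finset

/-- let `p = (h_1 … h_k)` be a partition of `n` and `O` an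
outline square associated to `p` (i.e. an outline rectangle associated to
`(p, p, p)`) such that `O i i` consists of `h_i ^ 2` copies of symbol `i` for
every `i`.  Then there is a latin square `L` of order `n` whose reduction
modulo `(p, p, p)` equals `O`, and `L` is a realization of `p` in normal
form. -/
theorem statement15 (n k : ℕ) (p : Fin k → ℕ)
    (hp : ∀ i, 0 < p i) (hpn : ∑ i, p i = n)
    (O : Fin k → Fin k → Multiset (Fin k))
    (hO : IsOutlineRectangle p p p O)
    (hdiag : ∀ i : Fin k, O i i = Multiset.replicate (p i ^ 2) i) :
    ∃ L : Fin n → Fin n → Fin n,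
      IsReduction p p p L O ∧ IsNormalFormRealization p L := by
  obtain ⟨f, hf⟩ := exists_fiber_eq_blockSet p hpn
  have hsize : fiberCard f = p := funext fun i => by rw [fiberCard, hf, card_blockSet p hpn]
  have hf_surj : Function.Surjective f := fun i => by
    have hi : 0 < fiberCard f i := by rw [hsize]; exact hp i
    obtain ⟨x, hx⟩ := card_pos.1 hi
    exact ⟨x, (mem_filter.1 hx).2⟩
  obtain ⟨L, hL, hLO⟩ := exists_latinSquare_reductionCount_eq hf_surj hf_surj hf_surj
    (N := fun i j l => (O i j).count l) (by rw [hsize]; exact .of_isOutlineRectangle hO)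
  have hred : IsReduction p p p L O := fun i j l => by
    rw [← hLO, reductionCount, hf, hf]
    exact congrArg card (filter_congr fun z _ => by rw [← hf l]; simp [fiber])
  refine ⟨L, hred, hL, fun i x hx y hy => ?_⟩
  have hfull : #((blockSet p n i ×ˢ blockSet p n i).filter fun z => L z.1 z.2 ∈ blockSet p n i)
      = #(blockSet p n i ×ˢ blockSet p n i) := by
    rw [← hred, hdiag, Multiset.count_replicate_self, card_product, card_blockSet p hpn, sq]
  exact filter_card_eq hfull (x, y) (mem_product.2 ⟨hx, hy⟩)
end

section
/- If O_1 and O_2 are outline arrays corresponding to frequency arrays F_1 and F_2 of order k respectively, then there exists an outline array O* corresponding to the frequency array F* of order k defined by F*(i,j) = F_1(i,j) + F_2(i,j) for all i,j. -/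
/-- An outline array corresponding to a frequency array `F` of order `k` (a
`k × k` array of non-negative integers): a `k × k` array `O` of multisets of
symbols from `{1,…,k}` (encoded as `Fin k`) such that `O i j` has exactly
`F i j` elements (with multiplicity), symbol `l` occurs exactly `F i l` times
in row `i`, and symbol `l` occurs exactly `F l j` times in column `j`. -/
def IsOutlineArray {k : ℕ} (F : Fin k → Fin k → ℕ)
    (O : Fin k → Fin k → Multiset (Fin k)) : Prop :=
  (∀ i j, Multiset.card (O i j) = F i j) ∧
  (∀ i l, ∑ j, (O i j).count l = F i l) ∧
  (∀ j l, ∑ i, (O i j).count l = F l j)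

theorem IsOutlineArray.add {k : ℕ} {F₁ F₂ : Fin k → Fin k → ℕ}
    {O₁ O₂ : Fin k → Fin k → Multiset (Fin k)}
    (h₁ : IsOutlineArray F₁ O₁) (h₂ : IsOutlineArray F₂ O₂) :
    IsOutlineArray (F₁ + F₂) (O₁ + O₂) := by
  obtain ⟨card₁, row₁, col₁⟩ := h₁
  obtain ⟨card₂, row₂, col₂⟩ := h₂
  refine ⟨fun i j => ?_, fun i l => ?_, fun j l => ?_⟩
  · simp only [Pi.add_apply, Multiset.card_add, card₁, card₂]
  · simp only [Pi.add_apply, Multiset.count_add, Finset.sum_add_distrib, row₁, row₂]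
  · simp only [Pi.add_apply, Multiset.count_add, Finset.sum_add_distrib, col₁, col₂]

/-- if `O₁` and `O₂` are outline arrays corresponding to
frequency arrays `F₁` and `F₂` of order `k`, then there exists an outline
array corresponding to the frequency array `F₁ + F₂`. -/
theorem statement16 (k : ℕ) (F₁ F₂ : Fin k → Fin k → ℕ)
    (O₁ O₂ : Fin k → Fin k → Multiset (Fin k))
    (h₁ : IsOutlineArray F₁ O₁) (h₂ : IsOutlineArray F₂ O₂) :
    ∃ O : Fin k → Fin k → Multiset (Fin k),
      IsOutlineArray (fun i j => F₁ i j + F₂ i j) O :=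
  ⟨O₁ + O₂, h₁.add h₂⟩
end

section
/- Suppose an outline array O exists corresponding to a frequency array F of order k, and let S_1, S_2, …, S_{k'} be a partition of {1,…,k} into k' nonempty sets. Then there exists an outline array O* corresponding to the frequency array F* of order k' defined by F*(i,j) = Σ_{x ∈ S_i} Σ_{y ∈ S_j} F(x,y) for all i,j ∈ {1,…,k'}. -/
/-!
Let `φ x` be the index of the block containing the symbol `x`. Merge the cells of each block
`S i × S j` of `O` into one cell and relabel every symbol `x` by `φ x`. The cell sizes add up
to `F*`, and the number of copies of `l` in a row or column of the merged array is the number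
of copies of symbols from `S l` in the corresponding rows or columns of `O`, which also adds
up to `F*`.
-/

open Finset

theorem Multiset.count_map_eq_sum_count_fiber {α β : Type*} [Fintype α] [DecidableEq α]
    [DecidableEq β] (φ : α → β) (s : Multiset α) (b : β) :
    (s.map φ).count b = ∑ a with φ a = b, s.count a := by
  calc (s.map φ).count b = card (s.filter fun a => b = φ a) := Multiset.count_map φ s b
    _ = ∑ a, (s.filter fun a => b = φ a).count a := (sum_count_eq_card (by simp)).symm
    _ = ∑ a with φ a = b, s.count a := by
      simp only [Multiset.count_filter, sum_filter, eq_comm]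

theorem exists_eq_fiber_of_partition {ι ι' : Type*} [Fintype ι] [DecidableEq ι']
    (S : ι' → Finset ι) (hdisj : ∀ i j, i ≠ j → Disjoint (S i) (S j))
    (hcover : ∀ x, ∃ i, x ∈ S i) :
    ∃ φ : ι → ι', S = fun i => ({x | φ x = i} : Finset ι) := by
  choose φ hφ using hcover
  refine ⟨φ, funext fun i => Finset.ext fun x => ?_⟩
  simp only [mem_filter, mem_univ, true_and]
  refine ⟨fun hx => ?_, fun h => h ▸ hφ x⟩
  by_contra h
  exact disjoint_left.mp (hdisj (φ x) i h) (hφ x) hx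

namespace IsOutlineArray

variable {k k' : ℕ} {F : Fin k → Fin k → ℕ} {O : Fin k → Fin k → Multiset (Fin k)}

theorem sum_count_map_row (hO : IsOutlineArray F O) (φ : Fin k → Fin k') (x : Fin k)
    (l : Fin k') : ∑ y, ((O x y).map φ).count l = ∑ m with φ m = l, F x m := by
  simp only [Multiset.count_map_eq_sum_count_fiber]
  rw [sum_comm]
  exact sum_congr rfl fun m _ => hO.2.1 x m

theorem sum_count_map_col (hO : IsOutlineArray F O) (φ : Fin k → Fin k') (y : Fin k)
    (l : Fin k') : ∑ x, ((O x y).map φ).count l = ∑ m with φ m = l, F m y := by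
  simp only [Multiset.count_map_eq_sum_count_fiber]
  rw [sum_comm]
  exact sum_congr rfl fun m _ => hO.2.2 y m

theorem collapse (hO : IsOutlineArray F O) (φ : Fin k → Fin k') :
    IsOutlineArray (fun i j => ∑ x with φ x = i, ∑ y with φ y = j, F x y)
      (fun i j => ∑ x with φ x = i, ∑ y with φ y = j, (O x y).map φ) := by
  refine ⟨fun i j => ?_, fun i l => ?_, fun j l => ?_⟩
  · simp only [Multiset.card_sum, Multiset.card_map, hO.1]
  · calc ∑ j, (∑ x with φ x = i, ∑ y with φ y = j, (O x y).map φ).count l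
        = ∑ x with φ x = i, ∑ j, ∑ y with φ y = j, ((O x y).map φ).count l := by
          simp only [Multiset.count_sum']
          exact sum_comm
      _ = ∑ x with φ x = i, ∑ m with φ m = l, F x m := by
          simp only [sum_fiberwise, hO.sum_count_map_row]
  · calc ∑ i, (∑ x with φ x = i, ∑ y with φ y = j, (O x y).map φ).count l
        = ∑ y with φ y = j, ∑ i, ∑ x with φ x = i, ((O x y).map φ).count l := by
          simp only [Multiset.count_sum']
          rw [sum_congr rfl fun i _ => sum_comm]
          exact sum_comm
      _ = ∑ x with φ x = l, ∑ y with φ y = j, F x y := by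
          simp only [sum_fiberwise, hO.sum_count_map_col]
          exact sum_comm

end IsOutlineArray

theorem statement17_general (k k' : ℕ) (F : Fin k → Fin k → ℕ)
    (O : Fin k → Fin k → Multiset (Fin k))
    (hO : IsOutlineArray F O)
    (S : Fin k' → Finset (Fin k))
    (hdisj : ∀ i j, i ≠ j → Disjoint (S i) (S j))
    (hcover : ∀ x : Fin k, ∃ i, x ∈ S i) :
    ∃ O' : Fin k' → Fin k' → Multiset (Fin k'),
      IsOutlineArray (fun i j : Fin k' => ∑ x ∈ S i, ∑ y ∈ S j, F x y) O' := by
  obtain ⟨φ, rfl⟩ := exists_eq_fiber_of_partition S hdisj hcover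
  exact ⟨_, hO.collapse φ⟩

/-- if an outline array exists for a frequency array `F` of
order `k`, and `S_1, …, S_{k'}` is a partition of `{1,…,k}` into `k'`
nonempty sets, then an outline array exists for the frequency array `F*` of
order `k'` given by `F*(i,j) = ∑_{x ∈ S_i} ∑_{y ∈ S_j} F(x,y)`. -/
theorem statement17 (k k' : ℕ) (F : Fin k → Fin k → ℕ)
    (O : Fin k → Fin k → Multiset (Fin k))
    (hO : IsOutlineArray F O)
    (S : Fin k' → Finset (Fin k))
    (hne : ∀ i, (S i).Nonempty)
    (hdisj : ∀ i j, i ≠ j → Disjoint (S i) (S j))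
    (hcover : ∀ x : Fin k, ∃ i, x ∈ S i) :
    ∃ O' : Fin k' → Fin k' → Multiset (Fin k'),
      IsOutlineArray (fun i j : Fin k' => ∑ x ∈ S i, ∑ y ∈ S j, F x y) O' :=
  statement17_general k k' F O hO S hdisj hcover
end

section
/- Let h_1 ≥ h_2 ≥ … ≥ h_k > 0 be integers and let n be an integer with n ≥ 2(h_1 + h_2 + … + h_k). Then there exists an incomplete latin square ILS(n; h_1 h_2 … h_k). -/
/-!
Let `s = h₁ + ⋯ + hₖ` and `t = n - s ≥ s`, and index rows, columns and symbols alike by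
`(Σ i, Fin hᵢ) ⊕ Fin t`. The `s × s` corner carries, on its `i`-th diagonal block, a cyclic
latin square on the block's own symbols, and elsewhere the symbol `ι x + ι y` of `Fin t`, for an
embedding `ι` of the corner indices into `Fin t`. As `n ≥ 2 s`, Ryser's condition is void and the
corner completes to a latin square of order `n`: first its rows to a latin `s × n` rectangle, then
the columns of that rectangle. Each step is König's decomposition of a regular bipartite
multigraph into perfect matchings.
-/

open Finset Function Fintype

namespace IncompleteLatinSquare

section Margins

variable {β : Type*} [Fintype β]

theorem exists_le_sum_eq (c : β → ℕ) {D : ℕ} (hD : D ≤ ∑ b, c b) :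
    ∃ m : β → ℕ, m ≤ c ∧ ∑ b, m b = D := by
  classical
  induction D with
  | zero => exact ⟨0, fun b => Nat.zero_le _, by simp⟩
  | succ D ih =>
    obtain ⟨m, hmc, hm⟩ := ih (by omega)
    obtain ⟨b₀, hb₀⟩ : ∃ b, m b < c b := by
      by_contra! hle
      have := sum_le_sum fun b (_ : b ∈ univ) => hle b
      omega
    refine ⟨m + Pi.single b₀ 1, fun b => ?_, by simp [sum_add_distrib, hm]⟩
    rcases eq_or_ne b b₀ with rfl | hb
    · simpa using hb₀
    · simpa [hb] using hmc b

theorem exists_rowSums_colSums_eq (c : β → ℕ) (K D : ℕ) (hc : ∑ b, c b = K * D) :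
    ∃ M : Fin K → β → ℕ, (∀ j, ∑ b, M j b = D) ∧ ∀ b, ∑ j, M j b = c b := by
  induction K generalizing c with
  | zero => exact ⟨Fin.elim0, fun j => j.elim0, fun b => by simp_all [sum_eq_zero_iff]⟩
  | succ K ih =>
    obtain ⟨m, hmc, hm⟩ := exists_le_sum_eq c (D := D) <| by
      rw [hc]
      exact Nat.le_mul_of_pos_left D K.succ_pos
    obtain ⟨M, hrow, hcol⟩ := ih (c - m) (by
      simp only [Pi.sub_apply]
      rw [sum_tsub_distrib _ fun b _ => hmc b, hc, hm, add_one_mul, Nat.add_sub_cancel])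
    refine ⟨Fin.cons m M, Fin.cases hm hrow, fun b => ?_⟩
    rw [Fin.sum_univ_succ]
    simp only [Fin.cons_zero, Fin.cons_succ, hcol b, Pi.sub_apply]
    exact Nat.add_sub_cancel' (hmc b)

end Margins

section RegularBipartite

variable {ι β : Type*} [Fintype ι] [Fintype β] {Δ : ℕ} (m : ι → β → ℕ)

theorem card_eq_of_regular (hΔ : 0 < Δ) (hrow : ∀ a, ∑ b, m a b = Δ)
    (hcol : ∀ b, ∑ a, m a b = Δ) : card ι = card β := by
  refine Nat.eq_of_mul_eq_mul_right hΔ ?_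
  calc card ι * Δ = ∑ a, ∑ b, m a b := by simp [hrow]
    _ = ∑ b, ∑ a, m a b := sum_comm
    _ = card β * Δ := by simp [hcol]

theorem exists_equiv_pos_of_regular [DecidableEq β] (hΔ : 0 < Δ) (hrow : ∀ a, ∑ b, m a b = Δ)
    (hcol : ∀ b, ∑ a, m a b = Δ) : ∃ f : ι ≃ β, ∀ a, 0 < m a (f a) := by
  let t : ι → Finset β := fun a => {b | 0 < m a b}
  have hall : ∀ S : Finset ι, #S ≤ #(S.biUnion t) := by
    intro S
    refine Nat.le_of_mul_le_mul_left ?_ hΔ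
    calc Δ * #S = ∑ a ∈ S, ∑ b, m a b := by simp [hrow, mul_comm]
      _ = ∑ a ∈ S, ∑ b ∈ S.biUnion t, m a b := by
        refine sum_congr rfl fun a ha => (sum_subset (subset_univ _) fun b _ hb => ?_).symm
        exact Nat.eq_zero_of_not_pos fun hpos => hb (mem_biUnion.2 ⟨a, ha, by simpa [t] using hpos⟩)
      _ = ∑ b ∈ S.biUnion t, ∑ a ∈ S, m a b := sum_comm
      _ ≤ ∑ b ∈ S.biUnion t, ∑ a, m a b :=
        sum_le_sum fun b _ => sum_le_sum_of_subset (subset_univ S)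
      _ = Δ * #(S.biUnion t) := by simp [hcol, mul_comm]
  obtain ⟨f, hf, hft⟩ := (all_card_le_biUnion_card_iff_exists_injective t).1 hall
  have hbij := (bijective_iff_injective_and_card f).2 ⟨hf, card_eq_of_regular m hΔ hrow hcol⟩
  exact ⟨Equiv.ofBijective f hbij, fun a => by simpa [t] using hft a⟩

theorem exists_equivs_of_regular [DecidableEq β] (hrow : ∀ a, ∑ b, m a b = Δ)
    (hcol : ∀ b, ∑ a, m a b = Δ) : ∃ M : Fin Δ → ι ≃ β, ∀ a b, #{d | M d a = b} = m a b := by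
  induction Δ generalizing m with
  | zero =>
    refine ⟨Fin.elim0, fun a b => ?_⟩
    simpa using ((sum_eq_zero_iff.1 (hrow a)) b (mem_univ b)).symm
  | succ Δ ih =>
    obtain ⟨f, hf⟩ := exists_equiv_pos_of_regular m Δ.succ_pos hrow hcol
    let m' : ι → β → ℕ := fun a b => m a b - if f a = b then 1 else 0
    have hle : ∀ a b, (if f a = b then 1 else 0) ≤ m a b := by
      intro a b
      split_ifs with hab
      · exact hab ▸ hf a
      · exact Nat.zero_le _
    have hrow' : ∀ a, ∑ b, m' a b = Δ := by
      intro a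
      rw [sum_tsub_distrib _ fun b _ => hle a b, hrow a, Fintype.sum_ite_eq]
      simp
    have hcol' : ∀ b, ∑ a, m' a b = Δ := by
      intro b
      rw [sum_tsub_distrib _ fun a _ => hle a b, hcol b,
        f.sum_comp fun b' => if b' = b then 1 else 0, Fintype.sum_ite_eq']
      rfl
    obtain ⟨M, hM⟩ := ih m' hrow' hcol'
    refine ⟨Fin.cons f M, fun a b => ?_⟩
    rw [card_filter, Fin.sum_univ_succ]
    simp only [Fin.cons_zero, Fin.cons_succ, ← card_filter, hM, m']
    exact Nat.add_sub_cancel' (hle a b)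

end RegularBipartite

section Extension

variable {ρ κ τ α : Type*} [Fintype ρ] [Fintype κ] [Fintype τ] [DecidableEq α]

theorem card_filter_notMem_image [Fintype α] {f : κ → α} (hf : Injective f) :
    #{σ | σ ∉ univ.image f} = card α - card κ := by
  rw [filter_not, filter_mem_eq_inter, univ_inter, ← compl_eq_univ_sdiff, card_compl,
    card_image_of_injective _ hf, card_univ]

/-- The missing symbols of the rows are the edges of a bipartite multigraph between rows and
symbols; padded with `card α - card ρ` dummy rows it becomes `card τ`-regular, and each of its
`card τ` perfect matchings fills one new column. -/
theorem exists_row_extension [Fintype α] (P : ρ → κ → α) (hP : ∀ x, Injective (P x))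
    (hcard : card κ + card τ = card α)
    (hmiss : ∀ σ, #{x | σ ∉ univ.image (P x)} ≤ card τ) :
    ∃ Q : ρ → τ → α, (∀ x, Bijective (Sum.elim (P x) (Q x))) ∧ ∀ j, Injective fun x => Q x j := by
  classical
  have hmiss_row : ∀ x, #{σ | σ ∉ univ.image (P x)} = card τ := fun x => by
    rw [card_filter_notMem_image (hP x)]
    omega
  have hmiss_sum : ∑ σ, #{x | σ ∉ univ.image (P x)} = card ρ * card τ := by
    simp only [card_filter]
    rw [sum_comm]
    simp only [← card_filter, hmiss_row, sum_const, card_univ, smul_eq_mul]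
  obtain ⟨MS, hMSrow, hMScol⟩ := exists_rowSums_colSums_eq
    (fun σ => card τ - #{x | σ ∉ univ.image (P x)}) (card α - card ρ) (card τ) (by
      rw [sum_tsub_distrib _ fun σ _ => hmiss σ, hmiss_sum, Nat.sub_mul]
      simp)
  let m : ρ ⊕ Fin (card α - card ρ) → α → ℕ :=
    Sum.elim (fun x σ => if σ ∉ univ.image (P x) then 1 else 0) MS
  have hm_row : ∀ a, ∑ σ, m a σ = card τ := by
    rintro (x | d)
    · simp only [m, Sum.elim_inl, ← card_filter, hmiss_row x]
    · exact hMSrow d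
  have hm_col : ∀ σ, ∑ a, m a σ = card τ := by
    intro σ
    rw [Fintype.sum_sum_type]
    simp only [m, Sum.elim_inl, Sum.elim_inr, hMScol σ, ← card_filter]
    exact Nat.add_sub_cancel' (hmiss σ)
  obtain ⟨M, hM⟩ := exists_equivs_of_regular m hm_row hm_col
  let e := equivFin τ
  refine ⟨fun x j => M (e j) (.inl x), fun x => ?_,
    fun j => (M (e j)).injective.comp Sum.inl_injective⟩
  have hcount : ∀ σ, #{d | M d (.inl x) = σ} = if σ ∉ univ.image (P x) then 1 else 0 :=
    fun σ => hM _ σ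
  have hnew : Injective fun j => M (e j) (.inl x) := by
    intro j j' hjj'
    have hle : #{d | M d (.inl x) = M (e j) (.inl x)} ≤ 1 := by
      rw [hcount]
      split_ifs <;> simp
    exact e.injective (card_le_one.1 hle _ (by simp) _ (by simp [hjj']))
  have hfresh : ∀ y j, P x y ≠ M (e j) (.inl x) := by
    intro y j hyj
    have hpos : 0 < #{d | M d (.inl x) = P x y} := card_pos.2 ⟨e j, by simp [hyj]⟩
    simp [hcount] at hpos
  exact (bijective_iff_injective_and_card _).2 ⟨(hP x).sumElim hnew hfresh, by simpa using hcard⟩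

theorem card_filter_notMem_column_le (R : ρ → κ → α) (hrow : ∀ x, Bijective (R x))
    (hcol : ∀ y, Injective fun x => R x y) (σ : α) :
    #{y | σ ∉ univ.image fun x => R x y} ≤ card κ - card ρ := by
  let f x := surjInv (hrow x).2 σ
  have hf : ∀ x, R x (f x) = σ := fun x => surjInv_eq (hrow x).2 σ
  have hcover : card ρ ≤ #{y | σ ∈ univ.image fun x => R x y} := by
    simpa using card_le_card_of_injOn (s := univ) f (fun x _ => by simpa using ⟨x, hf x⟩)
      fun x _ x' _ hxx' => hcol (f x) ((hf x).trans (hxx' ▸ hf x').symm)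
  have := card_filter_add_card_filter_not (s := univ) fun y => σ ∈ univ.image fun x => R x y
  rw [card_univ] at this
  omega

theorem exists_latin_completion [Fintype α] (P : κ → κ → α) (hrow : ∀ x, Injective (P x))
    (hcol : ∀ y, Injective fun x => P x y) (hcard : card κ + card τ = card α)
    (hle : card κ ≤ card τ) :
    ∃ T : κ ⊕ τ → κ ⊕ τ → α, (∀ x, Bijective (T x)) ∧ (∀ y, Bijective fun x => T x y) ∧
      ∀ x y, T (.inl x) (.inl y) = P x y := by
  obtain ⟨Q, hQrow, hQcol⟩ := exists_row_extension (τ := τ) P hrow hcard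
    fun σ => (card_filter_le _ _).trans (by simpa using hle)
  let R x := Sum.elim (P x) (Q x)
  have hRcol : ∀ y, Injective fun x => R x y := by
    rintro (y | j)
    exacts [hcol y, hQcol j]
  obtain ⟨Q', hQ'row, hQ'col⟩ := exists_row_extension (τ := τ) (fun y x => R x y) hRcol hcard
    fun σ => (card_filter_notMem_column_le R hQrow hRcol σ).trans (by simp)
  refine ⟨fun x y => Sum.elim (fun x => R x y) (Q' y) x, ?_, hQ'row, fun x y => rfl⟩
  rintro (x | j)
  · exact hQrow x
  · exact (bijective_iff_injective_and_card _).2 ⟨hQ'col j, by simpa using hcard⟩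

end Extension

section Corner

variable {k : ℕ} {H : Fin k → ℕ} {t : ℕ}

def corner (ι : (Σ i, Fin (H i)) → Fin t) (x y : Σ i, Fin (H i)) : (Σ i, Fin (H i)) ⊕ Fin t :=
  if x.1 = y.1 then .inl ⟨x.1, ⟨(x.2 + y.2) % H x.1, Nat.mod_lt _ x.2.pos⟩⟩
  else .inr (ι x + ι y)

theorem corner_comm (ι : (Σ i, Fin (H i)) → Fin t) (x y : Σ i, Fin (H i)) :
    corner ι x y = corner ι y x := by
  obtain ⟨i, a⟩ := x
  obtain ⟨j, b⟩ := y
  unfold corner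
  split_ifs with hij hji hji
  · subst hij
    simp [add_comm]
  · exact absurd hij.symm hji
  · exact absurd hji.symm hij
  · rw [add_comm]

theorem corner_injective {ι : (Σ i, Fin (H i)) → Fin t} (hι : Injective ι)
    (x : Σ i, Fin (H i)) : Injective (corner ι x) := by
  obtain ⟨i, a⟩ := x
  rintro ⟨j, b⟩ ⟨j', b'⟩ h
  unfold corner at h
  split_ifs at h with hj hj'
  · dsimp only at hj hj'
    subst hj hj'
    simp only [Sum.inl.injEq, Sigma.mk.injEq, heq_eq_eq, Fin.mk.injEq, true_and] at h
    exact congrArg _ (Fin.ext ((Nat.ModEq.add_left_cancel' _ h).eq_of_lt_of_lt b.2 b'.2))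
  · exact hι (add_left_cancel (Sum.inr_injective h))

theorem corner_injective_left {ι : (Σ i, Fin (H i)) → Fin t} (hι : Injective ι)
    (y : Σ i, Fin (H i)) : Injective fun x => corner ι x y := by
  intro x x' h
  dsimp only at h
  rw [corner_comm ι x, corner_comm ι x'] at h
  exact corner_injective hι y h

variable (H t) in
def block (i : Fin k) : Finset ((Σ i, Fin (H i)) ⊕ Fin t) :=
  univ.map ⟨fun a => .inl ⟨i, a⟩, Sum.inl_injective.comp sigma_mk_injective⟩

theorem card_block (i : Fin k) : #(block H t i) = H i := by
  simp [block]

theorem disjoint_block {i j : Fin k} (hij : i ≠ j) : Disjoint (block H t i) (block H t j) := by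
  simp [block, disjoint_left, hij.symm]

theorem mem_block {i : Fin k} {x : (Σ i, Fin (H i)) ⊕ Fin t} :
    x ∈ block H t i ↔ ∃ a, .inl ⟨i, a⟩ = x := by
  simp [block]

theorem corner_mem_block (ι : (Σ i, Fin (H i)) → Fin t) (i : Fin k) (a b : Fin (H i)) :
    corner ι ⟨i, a⟩ ⟨i, b⟩ ∈ block H t i := by
  simp [corner, block]

end Corner

theorem hasILS_of_latin {X : Type*} [Fintype X] {n k : ℕ} (hX : card X = n) (T : X → X → X)
    (hrow : ∀ x, Bijective (T x)) (hcol : ∀ y, Bijective fun x => T x y) (H : Fin k → ℕ)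
    (B : Fin k → Finset X) (hB : ∀ i, #(B i) = H i) (hdisj : ∀ i j, i ≠ j → Disjoint (B i) (B j))
    (hclosed : ∀ i, ∀ x ∈ B i, ∀ y ∈ B i, T x y ∈ B i) : HasILS n H := by
  let e := Fintype.equivFinOfCardEq hX
  let B' i := (B i).map e.toEmbedding
  have hB' : ∀ i, #(B' i) = H i := fun i => by simp [B', hB]
  have hdisj' : ∀ i j, i ≠ j → Disjoint (B' i) (B' j) := fun i j hij => by
    simpa [B', disjoint_map] using hdisj i j hij
  refine ⟨fun i j => e (T (e.symm i) (e.symm j)), ⟨fun i => ?_, fun j => ?_⟩,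
    B', B', B', hB', hB', hB', hdisj', hdisj', hdisj', fun i x hx y hy => ?_⟩
  · exact e.bijective.comp ((hrow _).comp e.symm.bijective)
  · exact e.bijective.comp ((hcol _).comp e.symm.bijective)
  · simp only [B', mem_map_equiv, Equiv.symm_apply_apply] at hx hy ⊢
    exact hclosed i _ hx _ hy

theorem sum_fin_add_one_eq_sum_Icc (h : ℕ → ℕ) (k : ℕ) :
    ∑ i : Fin k, h (i + 1) = ∑ i ∈ Icc 1 k, h i := by
  rw [Fin.sum_univ_eq_sum_range (fun i => h (i + 1)), range_eq_Ico, sum_Ico_add',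
    Ico_add_one_right_eq_Icc]

end IncompleteLatinSquare

open IncompleteLatinSquare in
theorem statement18_general (k n : ℕ) (h : ℕ → ℕ)
    (hn : 2 * ∑ i ∈ Finset.Icc 1 k, h i ≤ n) :
    HasILS n (fun i : Fin k => h ((i : ℕ) + 1)) := by
  set H : Fin k → ℕ := fun i => h (i + 1)
  set s := ∑ i ∈ Icc 1 k, h i
  have hs : card (Σ i, Fin (H i)) = s := by simp [H, sum_fin_add_one_eq_sum_Icc, s]
  obtain ⟨ι⟩ : Nonempty ((Σ i, Fin (H i)) ↪ Fin (n - s)) :=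
    Embedding.nonempty_of_card_le (by simp only [hs, Fintype.card_fin]; omega)
  obtain ⟨T, hrow, hcol, hT⟩ := exists_latin_completion (corner ι) (corner_injective ι.injective)
    (corner_injective_left ι.injective) card_sum.symm (by simp only [hs, Fintype.card_fin]; omega)
  refine hasILS_of_latin (by simp only [card_sum, hs, Fintype.card_fin]; omega) T hrow hcol H
    (block H (n - s)) (fun i => card_block i) (fun i j => disjoint_block) fun i x hx y hy => ?_
  obtain ⟨a, rfl⟩ := mem_block.1 hx
  obtain ⟨b, rfl⟩ := mem_block.1 hy
  exact hT _ _ ▸ corner_mem_block ι i a b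

/-- if `h_1 ≥ h_2 ≥ … ≥ h_k > 0` and `n ≥ 2 (h_1 + … + h_k)`,
then an `ILS(n; h_1 … h_k)` exists. -/
theorem statement18 (k n : ℕ) (h : ℕ → ℕ) (hk : 1 ≤ k)
    (hpos : ∀ i, 1 ≤ i → i ≤ k → 0 < h i)
    (hmono : ∀ i, 1 ≤ i → i < k → h (i + 1) ≤ h i)
    (hn : 2 * ∑ i ∈ Finset.Icc 1 k, h i ≤ n) :
    HasILS n (fun i : Fin k => h ((i : ℕ) + 1)) :=
  statement18_general k n h hn
end
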